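/- arXiv:1312.2219 — 8 statements merged into one kernel-verified Lean document; each statement's English description precedes it below -/
import Mathlib

section
/- Let n be an odd integer with |n| ≥ 3, and let j, j' be odd integers with |j' - j| = 2, j ≠ n and j' ≠ -n. Then |n - j| · |n + j'| ≥ |n|. -/
/-- For an odd integer `n` with `|n| ≥ 3` and odd integers `j`, `j'` with `|j' - j| = 2`,
`j ≠ n` and `j' ≠ -n`, one has `|n - j| ⬝ |n + j'| ≥ |n|`. -/
theorem stmt1 (n j j' : ℤ) (hn : Odd n) (hn3 : 3 ≤ |n|)
    (hj : Odd j) (hj' : Odd j') (hdiff : |j' - j| = 2) (h1 : j ≠ n) (h2 : j' ≠ -n) :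
    |n| ≤ |n - j| * |n + j'| := by
  have ea : Even (n - j) := hn.sub_odd hj
  have eb : Even (n + j') := hn.add_odd hj'
  obtain ⟨k, hk⟩ := ea
  obtain ⟨l, hl⟩ := eb
  have ha2 : 2 ≤ |n - j| := by
    rcases abs_cases (n - j) with ⟨h, _⟩ | ⟨h, _⟩ <;> omega
  have hb2 : 2 ≤ |n + j'| := by
    rcases abs_cases (n + j') with ⟨h, _⟩ | ⟨h, _⟩ <;> omega
  have hsum : 2 * |n| - 2 ≤ |n - j| + |n + j'| := by
    rcases abs_cases n with ⟨h, _⟩ | ⟨h, _⟩ <;>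
    rcases abs_cases (n - j) with ⟨ha, _⟩ | ⟨ha, _⟩ <;>
    rcases abs_cases (n + j') with ⟨hb, _⟩ | ⟨hb, _⟩ <;>
    rcases abs_cases (j' - j) with ⟨hd, _⟩ | ⟨hd, _⟩ <;>
    omega
  nlinarith [mul_nonneg (by linarith : (0:ℤ) ≤ |n - j| - 2) (by linarith : (0:ℤ) ≤ |n + j'| - 2)]
end

section
/- Let D = max{|a|, |A|, |b|, |B|}. Then for every m ∈ ℕ with m ≥ 1, every n = ±(2m+1), every r ∈ ℤ_{≥0}, every admissible walk x ∈ X_n(r) (which necessarily has 2ν+1 steps with ν = m + r), and every z ∈ ℂ with |z| ≤ 1/2, one has |h⁺(x,z)| ≤ D^{2ν+1} · (2/m)^{ν}. -/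
/-!
The numerator of `h⁺(x, z)` has `2ν + 1` factors of norm at most `D`. The `2ν` factors of the
denominator pair up as `(n - j_k + z)(n + j_{k+1} + z)` for odd `k`: both integer parts are even
and nonzero by admissibility, and they add up to `2n ± 2`, of absolute value at least `4m`; since
`|z| ≤ 1/2`, each pair then has norm at least `m/2`.
-/

open Finset

noncomputable section

/-- Coefficient function `p`: `p(2) = A`, `p(-2) = a`. -/
def pc (a A : ℂ) (w : ℤ) : ℂ := if w = 2 then A else if w = -2 then a else 0

/-- Coefficient function `q`: `q(2) = B`, `q(-2) = b`. -/
def qc (b B : ℂ) (w : ℤ) : ℂ := if w = 2 then B else if w = -2 then b else 0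

/-- Vertex `j_k = -n + x_1 + ⋯ + x_k` of a walk `x` starting at `-n`. -/
def vtx (n : ℤ) (x : List ℤ) (k : ℕ) : ℤ := -n + (x.take k).sum

/-- An admissible walk from `-n` to `n`: odd length, steps in `{-2, 2}`, total sum `2n`,
and the vertices `j_k` (for `1 ≤ k < length`) satisfy `j_k ≠ n` for odd `k` and
`j_k ≠ -n` for even `k`. -/
def AdmX (n : ℤ) (x : List ℤ) : Prop :=
  Odd x.length ∧ (∀ s ∈ x, s = 2 ∨ s = -2) ∧ x.sum = 2 * n ∧
    ∀ k : ℕ, 1 ≤ k → k < x.length →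
      (Odd k → vtx n x k ≠ n) ∧ (Even k → vtx n x k ≠ -n)

/-- `X_n(r)`: admissible walks from `-n` to `n` with exactly `r` negative steps if `n > 0`,
resp. exactly `r` positive steps if `n < 0`. -/
def Xw (n : ℤ) (r : ℕ) : Set (List ℤ) :=
  {x | AdmX n x ∧ (0 < n → x.count (-2) = r) ∧ (n < 0 → x.count 2 = r)}

/-- Numerator of `h⁺`: `q(x_1) p(x_2) q(x_3) ⋯ p(x_{2ν}) q(x_{2ν+1})`. -/
def numX (a A b B : ℂ) (x : List ℤ) : ℂ :=
  ∏ t ∈ Finset.range x.length,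
    (if t % 2 = 0 then qc b B (x.getD t 0) else pc a A (x.getD t 0))

/-- Denominator of `h⁺`: the product of the factors `(n - j_k + z)` for odd `k` and
`(n + j_k + z)` for even `k`, `1 ≤ k ≤ 2ν`. -/
def denX (n : ℤ) (x : List ℤ) (z : ℂ) : ℂ :=
  ∏ k ∈ Finset.Icc 1 (x.length - 1),
    (if k % 2 = 1 then ((n : ℂ) - (vtx n x k : ℂ) + z) else ((n : ℂ) + (vtx n x k : ℂ) + z))

/-- `h⁺(x, z)`. -/
def hX (a A b B : ℂ) (n : ℤ) (x : List ℤ) (z : ℂ) : ℂ := numX a A b B x / denX n x z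

/-- `σ⁺_r(n, z) = ∑_{x ∈ X_n(r)} h⁺(x, z)`. -/
def sigmaX (a A b B : ℂ) (n : ℤ) (r : ℕ) (z : ℂ) : ℂ :=
  ∑' x : Xw n r, hX a A b B n (x : List ℤ) z

/-- `β⁺_n(z) = ∑_{r=0}^∞ σ⁺_r(n, z)`. -/
def betaX (a A b B : ℂ) (n : ℤ) (z : ℂ) : ℂ := ∑' r : ℕ, sigmaX a A b B n r z

lemma norm_pc_le (a A : ℂ) (w : ℤ) : ‖pc a A w‖ ≤ max ‖a‖ ‖A‖ := by
  unfold pc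
  split_ifs <;> simp

lemma norm_qc_le (b B : ℂ) (w : ℤ) : ‖qc b B w‖ ≤ max ‖b‖ ‖B‖ := by
  unfold qc
  split_ifs <;> simp

lemma norm_numX_le (a A b B : ℂ) (x : List ℤ) :
    ‖numX a A b B x‖ ≤ max (max ‖a‖ ‖A‖) (max ‖b‖ ‖B‖) ^ x.length := by
  rw [← Finset.card_range x.length, ← Finset.prod_const, numX, norm_prod]
  refine Finset.prod_le_prod (fun _ _ ↦ by positivity) fun t _ ↦ ?_
  split_ifs
  · exact (norm_qc_le b B _).trans (le_max_right _ _)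
  · exact (norm_pc_le a A _).trans (le_max_left _ _)

section PlusMinusTwoSteps

variable {l : List ℤ}

lemma length_eq_count_add_count (h : ∀ s ∈ l, s = 2 ∨ s = -2) :
    l.length = l.count 2 + l.count (-2) := by
  induction l with
  | nil => rfl
  | cons s l ih =>
    rcases h s List.mem_cons_self with rfl | rfl <;>
      simp [ih fun t ht ↦ h t (List.mem_cons_of_mem _ ht)] <;> ring

lemma sum_eq_count_sub_count (h : ∀ s ∈ l, s = 2 ∨ s = -2) :
    l.sum = 2 * (l.count 2 : ℤ) - 2 * (l.count (-2) : ℤ) := by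
  induction l with
  | nil => rfl
  | cons s l ih =>
    rcases h s List.mem_cons_self with rfl | rfl <;>
      simp [ih fun t ht ↦ h t (List.mem_cons_of_mem _ ht)] <;> ring

end PlusMinusTwoSteps

lemma length_of_mem_Xw {n : ℤ} {r : ℕ} {x : List ℤ} (hx : x ∈ Xw n r) (hn : n ≠ 0) :
    x.length = n.natAbs + 2 * r := by
  obtain ⟨⟨-, hsteps, hsum, -⟩, hpos, hneg⟩ := hx
  have hlen := length_eq_count_add_count hsteps
  have hsum' := sum_eq_count_sub_count hsteps
  rcases hn.lt_or_gt with hn | hn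
  · have := hneg hn; omega
  · have := hpos hn; omega

lemma vtx_add_one (n : ℤ) (x : List ℤ) {k : ℕ} (hk : k < x.length) :
    vtx n x (k + 1) = vtx n x k + x[k] := by
  rw [vtx, vtx, List.take_add_one, List.sum_append, List.getElem?_eq_getElem hk]
  simp [add_assoc]

lemma even_add_vtx (n : ℤ) {x : List ℤ} (h : ∀ s ∈ x, Even s) (k : ℕ) :
    Even (n + vtx n x k) := by
  rw [vtx, add_neg_cancel_left, even_iff_two_dvd]
  exact List.dvd_sum fun s hs ↦ (h s (List.mem_of_mem_take hs)).two_dvd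

lemma two_le_abs_of_even {u : ℤ} (hu : Even u) (hu0 : u ≠ 0) : 2 ≤ |u| := by
  obtain ⟨c, rfl⟩ := hu
  rcases abs_cases (c + c) with ⟨h, _⟩ | ⟨h, _⟩ <;> omega

lemma abs_sub_norm_le_norm_intCast_add (u : ℤ) (z : ℂ) : |(u : ℝ)| - ‖z‖ ≤ ‖(u : ℂ) + z‖ := by
  simpa [Complex.norm_intCast] using norm_sub_norm_le (u : ℂ) (-z)

lemma half_le_norm_mul_of_even {m : ℕ} {u v : ℤ} (hu : Even u) (hv : Even v)
    (hu0 : u ≠ 0) (hv0 : v ≠ 0) (huv : 4 * (m : ℤ) ≤ |u + v|) {z : ℂ} (hz : ‖z‖ ≤ 1 / 2) :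
    (m : ℝ) / 2 ≤ ‖((u : ℂ) + z) * ((v : ℂ) + z)‖ := by
  have hu2 : (2 : ℝ) ≤ |(u : ℝ)| := by exact_mod_cast two_le_abs_of_even hu hu0
  have hv2 : (2 : ℝ) ≤ |(v : ℝ)| := by exact_mod_cast two_le_abs_of_even hv hv0
  have hsum : 4 * (m : ℝ) ≤ |(u : ℝ)| + |(v : ℝ)| := by
    exact_mod_cast huv.trans (abs_add_le u v)
  have hm : (0 : ℝ) ≤ m := m.cast_nonneg
  have hu' : |(u : ℝ)| - 1 / 2 ≤ ‖(u : ℂ) + z‖ :=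
    (abs_sub_norm_le_norm_intCast_add u z).trans' (by linarith)
  have hv' : |(v : ℝ)| - 1 / 2 ≤ ‖(v : ℂ) + z‖ :=
    (abs_sub_norm_le_norm_intCast_add v z).trans' (by linarith)
  rw [norm_mul]
  calc (m : ℝ) / 2 ≤ (|(u : ℝ)| - 1 / 2) * (|(v : ℝ)| - 1 / 2) := by nlinarith
    _ ≤ ‖(u : ℂ) + z‖ * ‖(v : ℂ) + z‖ := mul_le_mul hu' hv' (by linarith) (by linarith)

lemma half_le_norm_denX_pair {m : ℕ} {n : ℤ} (hn : n.natAbs = 2 * m + 1)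
    {x : List ℤ} (hx : AdmX n x) {k : ℕ} (hk : Odd k) (hk' : k + 1 < x.length)
    {z : ℂ} (hz : ‖z‖ ≤ 1 / 2) :
    (m : ℝ) / 2 ≤ ‖((n : ℂ) - (vtx n x k : ℂ) + z) * ((n : ℂ) + (vtx n x (k + 1) : ℂ) + z)‖ := by
  obtain ⟨-, hsteps, -, hvtx⟩ := hx
  have heven : ∀ s ∈ x, Even s := fun s hs ↦ by rcases hsteps s hs with rfl | rfl <;> decide
  have hk0 : k < x.length := by omega
  have hstep := vtx_add_one n x hk0
  have hxk := hsteps _ (List.getElem_mem hk0)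
  have hk1 := (hvtx k hk.pos (by omega)).1 hk
  have hk2 := (hvtx (k + 1) (by omega) (by omega)).2 hk.add_one
  have hu : Even (n - vtx n x k) := by
    have := even_add_vtx n heven k
    rw [show n - vtx n x k = 2 * n - (n + vtx n x k) by ring]
    exact (even_two_mul n).sub this
  push_cast [← Int.cast_sub, ← Int.cast_add]
  refine half_le_norm_mul_of_even hu (even_add_vtx n heven _) (sub_ne_zero.2 hk1.symm)
    (by omega) ?_ hz
  rw [hstep]
  rcases abs_cases (n - vtx n x k + (n + (vtx n x k + x[k]))) with ⟨h, _⟩ | ⟨h, _⟩ <;> omega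

lemma prod_Icc_one_two_mul {M : Type*} [CommMonoid M] (g : ℕ → M) (ν : ℕ) :
    ∏ k ∈ Finset.Icc 1 (2 * ν), g k = ∏ i ∈ Finset.range ν, g (2 * i + 1) * g (2 * i + 2) := by
  induction ν with
  | zero => rfl
  | succ ν ih =>
    rw [Finset.prod_range_succ, ← ih, mul_add_one, Finset.prod_Icc_succ_top (by omega),
      Finset.prod_Icc_succ_top (by omega), mul_assoc]

lemma norm_denX_ge {m : ℕ} {n : ℤ} (hn : n.natAbs = 2 * m + 1) {ν : ℕ}
    {x : List ℤ} (hx : AdmX n x) (hlen : x.length = 2 * ν + 1) {z : ℂ} (hz : ‖z‖ ≤ 1 / 2) :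
    ((m : ℝ) / 2) ^ ν ≤ ‖denX n x z‖ := by
  rw [← Finset.card_range ν, ← Finset.prod_const, denX, hlen, Nat.add_sub_cancel,
    prod_Icc_one_two_mul, norm_prod]
  refine Finset.prod_le_prod (fun _ _ ↦ by positivity) fun i hi ↦ ?_
  rw [Finset.mem_range] at hi
  rw [if_pos (by omega), if_neg (by omega)]
  exact half_le_norm_denX_pair hn hx (odd_two_mul_add_one i) (by omega) hz

theorem stmt2_general (a A b B : ℂ)
    (D : ℝ) (hD : D = max (max ‖a‖ ‖A‖) (max ‖b‖ ‖B‖))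
    (m : ℕ) (hm : 1 ≤ m) (n : ℤ) (hn : n = 2 * m + 1 ∨ n = -(2 * m + 1))
    (r : ℕ) (x : List ℤ) (hx : x ∈ Xw n r) (z : ℂ) (hz : ‖z‖ ≤ 1 / 2) :
    ‖hX a A b B n x z‖ ≤ D ^ (2 * (m + r) + 1) * (2 / (m : ℝ)) ^ (m + r) := by
  have hnabs : n.natAbs = 2 * m + 1 := by omega
  have hlen : x.length = 2 * (m + r) + 1 := by
    rw [length_of_mem_Xw hx (by omega)]; omega
  have hden := norm_denX_ge hnabs hx.1 hlen hz
  have hpos : (0 : ℝ) < ((m : ℝ) / 2) ^ (m + r) := by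
    have : (1 : ℝ) ≤ m := by exact_mod_cast hm
    positivity
  rw [hX, norm_div]
  calc ‖numX a A b B x‖ / ‖denX n x z‖ ≤ D ^ x.length / ((m : ℝ) / 2) ^ (m + r) :=
        div_le_div₀ (by rw [hD]; positivity) (hD ▸ norm_numX_le a A b B x) hpos hden
    _ = D ^ (2 * (m + r) + 1) * (2 / (m : ℝ)) ^ (m + r) := by
        rw [hlen, div_eq_mul_inv, ← inv_pow, inv_div]

/-- With `D = max {|a|, |A|, |b|, |B|}`: for `m ≥ 1`, `n = ±(2m+1)`, `r ∈ ℤ_{≥0}`,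
every admissible walk `x ∈ X_n(r)` (which has `2ν + 1` steps, `ν = m + r`) and every
`z ∈ ℂ` with `|z| ≤ 1/2`, one has `|h⁺(x, z)| ≤ D^(2ν+1) (2/m)^ν`. -/
theorem stmt2 (a A b B : ℂ) (ha : a ≠ 0) (hA : A ≠ 0) (hb : b ≠ 0) (hB : B ≠ 0)
    (D : ℝ) (hD : D = max (max ‖a‖ ‖A‖) (max ‖b‖ ‖B‖))
    (m : ℕ) (hm : 1 ≤ m) (n : ℤ) (hn : n = 2 * m + 1 ∨ n = -(2 * m + 1))
    (r : ℕ) (x : List ℤ) (hx : x ∈ Xw n r) (z : ℂ) (hz : ‖z‖ ≤ 1 / 2) :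
    ‖hX a A b B n x z‖ ≤ D ^ (2 * (m + r) + 1) * (2 / (m : ℝ)) ^ (m + r) :=
  stmt2_general a A b B D hD m hm n hn r x hx z hz
end
end

section
/- There exist a constant C > 0 depending only on a, A, b, B and N ∈ ℕ such that for every integer n with |n| ≥ N, every integer ν ≥ 3, and every z ∈ ℂ with |z| ≤ 1/2, one has |τ_ν(n,z)| ≤ C^ν / |n|^ν; consequently ∑_{ν=3}^∞ |τ_ν(n,z)| = O(1/|n|³) uniformly for |z| ≤ 1/2. -/
open Finset

noncomputable section

/-- Vertex `j_k = n + w_1 + ⋯ + w_k` of a walk `w` starting at `n`. -/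
def vtxW (n : ℤ) (w : List ℤ) (k : ℕ) : ℤ := n + (w.take k).sum

/-- An admissible walk from `n` to `n` of length `2ν`: steps in `{-2, 2}`, total sum `0`,
and the vertices `j_k` (for `1 ≤ k ≤ 2ν - 1`) satisfy `j_k ≠ -n` for odd `k` and
`j_k ≠ n` for even `k`. -/
def AdmW (n : ℤ) (ν : ℕ) (w : List ℤ) : Prop :=
  w.length = 2 * ν ∧ (∀ s ∈ w, s = 2 ∨ s = -2) ∧ w.sum = 0 ∧
    ∀ k : ℕ, 1 ≤ k → k < w.length →
      (Odd k → vtxW n w k ≠ -n) ∧ (Even k → vtxW n w k ≠ n)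

/-- `W_n(ν)`: admissible walks from `n` to `n` with `2ν` steps. -/
def Ww (n : ℤ) (ν : ℕ) : Set (List ℤ) := {w | AdmW n ν w}

/-- Numerator of `h`: `p(w_1) q(w_2) ⋯ p(w_{2ν-1}) q(w_{2ν})`. -/
def numW (a A b B : ℂ) (w : List ℤ) : ℂ :=
  ∏ t ∈ Finset.range w.length,
    (if t % 2 = 0 then pc a A (w.getD t 0) else qc b B (w.getD t 0))

/-- Denominator of `h`: the product of the factors `(n + j_k + z)` for odd `k` and
`(n - j_k + z)` for even `k`, `1 ≤ k ≤ 2ν - 1`. -/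
def denW (n : ℤ) (w : List ℤ) (z : ℂ) : ℂ :=
  ∏ k ∈ Finset.Icc 1 (w.length - 1),
    (if k % 2 = 1 then ((n : ℂ) + (vtxW n w k : ℂ) + z) else ((n : ℂ) - (vtxW n w k : ℂ) + z))

/-- `h(w, z)`. -/
def hW (a A b B : ℂ) (n : ℤ) (w : List ℤ) (z : ℂ) : ℂ := numW a A b B w / denW n w z

/-- `τ_ν(n, z) = ∑_{w ∈ W_n(ν)} h(w, z)`. -/
def tauW (a A b B : ℂ) (n : ℤ) (ν : ℕ) (z : ℂ) : ℂ :=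
  ∑' w : Ww n ν, hW a A b B n (w : List ℤ) z

/-- `α_n(z) = ∑_{ν=1}^∞ τ_ν(n, z)`. -/
def alphaW (a A b B : ℂ) (n : ℤ) (z : ℂ) : ℂ := ∑' ν : ℕ, tauW a A b B n (ν + 1) z

/-! There are at most `4 ^ ν` admissible walks of length `2ν` and each numerator is at most
`M ^ (2ν)`, so everything rests on the lower bound `(|n|/2) ^ ν` for the denominator. Its
factors are `m + z` with `m` a nonzero even integer, hence of norm at least `1`; the first one
is about `2n`, and in each later pair `(2i, 2i+1)` either the walk is near its start, so that
`n + j_{2i+1}` is about `2n`, or it is far from it, so that `n - j_{2i}` is large. The tail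
`ν ≥ 3` is then dominated by a geometric series. -/

def denWFactor (n : ℤ) (w : List ℤ) (k : ℕ) : ℤ :=
  if k % 2 = 1 then n + vtxW n w k else n - vtxW n w k

lemma denW_eq_prod (n : ℤ) (w : List ℤ) (z : ℂ) :
    denW n w z = ∏ k ∈ Icc 1 (w.length - 1), ((denWFactor n w k : ℂ) + z) := by
  unfold denW denWFactor
  refine prod_congr rfl fun k _ => ?_
  split_ifs <;> push_cast <;> ring

lemma denWFactor_of_odd {n : ℤ} {w : List ℤ} {k : ℕ} (hk : k % 2 = 1) :
    denWFactor n w k = 2 * n + (w.take k).sum := by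
  simp only [denWFactor, vtxW, hk, if_true]; ring

lemma denWFactor_of_even {n : ℤ} {w : List ℤ} {k : ℕ} (hk : k % 2 = 0) :
    denWFactor n w k = -(w.take k).sum := by
  simp only [denWFactor, vtxW, hk, zero_ne_one, if_false]; ring

lemma two_dvd_sum_take {w : List ℤ} (hw : ∀ s ∈ w, s = 2 ∨ s = -2) (k : ℕ) :
    2 ∣ (w.take k).sum :=
  List.dvd_sum fun s hs => by
    rcases hw s (List.mem_of_mem_take hs) with rfl | rfl <;> norm_num

lemma natAbs_sum_take_succ_sub {w : List ℤ} (hw : ∀ s ∈ w, s = 2 ∨ s = -2) {k : ℕ}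
    (hk : k < w.length) : ((w.take (k + 1)).sum - (w.take k).sum).natAbs = 2 := by
  rw [List.sum_take_succ w k hk, add_sub_cancel_left]
  rcases hw _ (List.getElem_mem hk) with h | h <;> rw [h] <;> rfl

namespace AdmW

variable {n : ℤ} {ν : ℕ} {w : List ℤ}

lemma two_dvd_denWFactor (hw : AdmW n ν w) (k : ℕ) : 2 ∣ denWFactor n w k := by
  have := two_dvd_sum_take hw.2.1 k
  rcases Nat.mod_two_eq_zero_or_one k with hk | hk
  · rw [denWFactor_of_even hk]; omega
  · rw [denWFactor_of_odd hk]; omega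

lemma denWFactor_ne_zero (hw : AdmW n ν w) {k : ℕ} (h1 : 1 ≤ k) (hk : k < w.length) :
    denWFactor n w k ≠ 0 := by
  have hv := hw.2.2.2 k h1 hk
  rcases Nat.mod_two_eq_zero_or_one k with hk2 | hk2
  · have := hv.2 (Nat.even_iff.mpr hk2)
    rw [denWFactor_of_even hk2]; simp only [vtxW] at this; omega
  · have := hv.1 (Nat.odd_iff.mpr hk2)
    rw [denWFactor_of_odd hk2]; simp only [vtxW] at this; omega

lemma two_mul_abs_sub_two_le_abs_denWFactor_one (hw : AdmW n ν w) (h : 0 < w.length) :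
    2 * |n| - 2 ≤ |denWFactor n w 1| := by
  have hstep := natAbs_sum_take_succ_sub hw.2.1 h
  rw [denWFactor_of_odd rfl]
  simp only [zero_add, List.take_zero, List.sum_nil, sub_zero] at hstep
  simp only [Int.abs_eq_natAbs]
  omega

lemma abs_le_abs_denWFactor_or (hw : AdmW n ν w) {i : ℕ} (hi : 2 * i < w.length) :
    |n| ≤ |denWFactor n w (2 * i + 1)| ∨ |n| - 1 ≤ |denWFactor n w (2 * i)| := by
  have hstep := natAbs_sum_take_succ_sub hw.2.1 hi
  rw [denWFactor_of_odd (by omega), denWFactor_of_even (by omega)]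
  simp only [Int.abs_eq_natAbs]
  omega

end AdmW

lemma abs_sub_half_le_norm_intCast_add (m : ℤ) {z : ℂ} (hz : ‖z‖ ≤ 1 / 2) :
    |(m : ℝ)| - 1 / 2 ≤ ‖(m : ℂ) + z‖ := by
  have := norm_sub_norm_le (m : ℂ) (-z)
  rw [norm_neg, sub_neg_eq_add, Complex.norm_intCast] at this
  linarith

lemma one_le_norm_intCast_add {m : ℤ} (h2 : 2 ∣ m) (h0 : m ≠ 0) {z : ℂ} (hz : ‖z‖ ≤ 1 / 2) :
    1 ≤ ‖(m : ℂ) + z‖ := by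
  have hm : (2 : ℤ) ≤ |m| := by simp only [Int.abs_eq_natAbs]; omega
  have : (2 : ℝ) ≤ |(m : ℝ)| := by exact_mod_cast hm
  linarith [abs_sub_half_le_norm_intCast_add m hz]

lemma pow_le_prod_Icc_of_pairs {f : ℕ → ℝ} (hf : ∀ k, 0 ≤ f k) {c : ℝ} (hc : 0 ≤ c)
    (h1 : c ≤ f 1) {ν : ℕ} (hpair : ∀ i, 1 ≤ i → i < ν → c ≤ f (2 * i) * f (2 * i + 1)) :
    c ^ ν ≤ ∏ k ∈ Icc 1 (2 * ν - 1), f k := by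
  induction ν with
  | zero => simp
  | succ ν ih =>
    rcases Nat.eq_zero_or_pos ν with rfl | hν
    · simpa using h1
    have hIcc : 2 * (ν + 1) - 1 = 2 * ν - 1 + 1 + 1 := by omega
    rw [hIcc, prod_Icc_succ_top (by omega), prod_Icc_succ_top (by omega),
      show 2 * ν - 1 + 1 = 2 * ν by omega, mul_assoc, pow_succ]
    exact mul_le_mul (ih fun i hi hlt => hpair i hi (by omega)) (hpair ν hν (by omega)) hc
      (prod_nonneg fun k _ => hf k)

lemma AdmW.pow_le_norm_denW {n : ℤ} {ν : ℕ} {w : List ℤ} (hw : AdmW n ν w) (hν : 1 ≤ ν)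
    (hn : 3 ≤ |n|) {z : ℂ} (hz : ‖z‖ ≤ 1 / 2) :
    (|(n : ℝ)| / 2) ^ ν ≤ ‖denW n w z‖ := by
  have hR : (3 : ℝ) ≤ |(n : ℝ)| := by exact_mod_cast hn
  have hlen : w.length = 2 * ν := hw.1
  have hlarge : ∀ k, |n| - 1 ≤ |denWFactor n w k| →
      |(n : ℝ)| / 2 ≤ ‖(denWFactor n w k : ℂ) + z‖ := fun k hk => by
    have : |(n : ℝ)| - 1 ≤ |(denWFactor n w k : ℝ)| := by exact_mod_cast hk
    linarith [abs_sub_half_le_norm_intCast_add (denWFactor n w k) hz]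
  have hone : ∀ k, 1 ≤ k → k < w.length → 1 ≤ ‖(denWFactor n w k : ℂ) + z‖ := fun k h1 hk =>
    one_le_norm_intCast_add (hw.two_dvd_denWFactor k) (hw.denWFactor_ne_zero h1 hk) hz
  rw [denW_eq_prod, norm_prod, hlen]
  refine pow_le_prod_Icc_of_pairs (f := fun k => ‖(denWFactor n w k : ℂ) + z‖)
    (fun _ => norm_nonneg _) (by positivity) (hlarge 1 ?_) fun i hi hiν => ?_
  · linarith [hw.two_mul_abs_sub_two_le_abs_denWFactor_one (by omega)]
  rcases hw.abs_le_abs_denWFactor_or (i := i) (by omega) with h | h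
  · nlinarith [hone (2 * i) (by omega) (by omega), hlarge (2 * i + 1) (by linarith)]
  · nlinarith [hone (2 * i + 1) (by omega) (by omega), hlarge (2 * i) h]

section Numerator

variable {a A b B : ℂ} {M : ℝ}

lemma norm_pc_le_s6 (hM : 0 ≤ M) (ha : ‖a‖ ≤ M) (hA : ‖A‖ ≤ M) (s : ℤ) : ‖pc a A s‖ ≤ M := by
  unfold pc; split_ifs <;> simp [*]

lemma norm_qc_le_s6 (hM : 0 ≤ M) (hb : ‖b‖ ≤ M) (hB : ‖B‖ ≤ M) (s : ℤ) : ‖qc b B s‖ ≤ M := by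
  unfold qc; split_ifs <;> simp [*]

lemma norm_numW_le (hM : 0 ≤ M) (ha : ‖a‖ ≤ M) (hA : ‖A‖ ≤ M) (hb : ‖b‖ ≤ M) (hB : ‖B‖ ≤ M)
    (w : List ℤ) : ‖numW a A b B w‖ ≤ M ^ w.length := by
  rw [numW, norm_prod]
  calc _ ≤ ∏ _t ∈ range w.length, M := prod_le_prod (fun _ _ => norm_nonneg _) fun t _ => by
          split_ifs
          exacts [norm_pc_le_s6 hM ha hA _, norm_qc_le_s6 hM hb hB _]
    _ = M ^ w.length := by rw [prod_const, card_range]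

end Numerator

def listsOfLength {α : Type*} [DecidableEq α] (s : Finset α) (m : ℕ) : Finset (List α) :=
  (Fintype.piFinset fun _ : Fin m => s).image List.ofFn

lemma mem_listsOfLength {α : Type*} [DecidableEq α] {s : Finset α} {l : List α}
    (hl : ∀ x ∈ l, x ∈ s) : l ∈ listsOfLength s l.length :=
  mem_image.mpr ⟨l.get, Fintype.mem_piFinset.mpr fun i => hl _ (l.get_mem i), List.ofFn_get l⟩

lemma card_listsOfLength_le {α : Type*} [DecidableEq α] (s : Finset α) (m : ℕ) :
    (listsOfLength s m).card ≤ s.card ^ m :=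
  card_image_le.trans (by simp [Fintype.card_piFinset])

lemma Ww_subset_listsOfLength (n : ℤ) (ν : ℕ) : Ww n ν ⊆ listsOfLength {2, -2} (2 * ν) := by
  intro w hw
  rw [← hw.1]
  exact mem_listsOfLength fun s hs => by simpa using hw.2.1 s hs

lemma norm_tsum_subtype_le_of_subset {α E : Type*} [NormedAddCommGroup E] {S : Set α}
    {T : Finset α} (hST : S ⊆ T) {f : α → E} {c : ℝ} (hc : 0 ≤ c) (hf : ∀ x ∈ S, ‖f x‖ ≤ c) :
    ‖∑' x : S, f x‖ ≤ T.card * c := by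
  rw [_root_.tsum_subtype, tsum_eq_sum fun x hx => Set.indicator_of_notMem (fun h => hx (hST h)) f]
  calc _ ≤ ∑ _x ∈ T, c := norm_sum_le_of_le T fun x _ => by
          by_cases hx : x ∈ S
          · simpa [hx] using hf x hx
          · simpa [hx] using hc
    _ = T.card * c := by rw [sum_const, nsmul_eq_mul]

lemma norm_tauW_le {a A b B : ℂ} {M : ℝ} (hM : 0 ≤ M) (ha : ‖a‖ ≤ M) (hA : ‖A‖ ≤ M)
    (hb : ‖b‖ ≤ M) (hB : ‖B‖ ≤ M) {n : ℤ} (hn : 3 ≤ |n|) {ν : ℕ} (hν : 1 ≤ ν) {z : ℂ}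
    (hz : ‖z‖ ≤ 1 / 2) :
    ‖tauW a A b B n ν z‖ ≤ (8 * M ^ 2) ^ ν / |(n : ℝ)| ^ ν := by
  have hR : (0 : ℝ) < |(n : ℝ)| := by
    have : (3 : ℝ) ≤ |(n : ℝ)| := by exact_mod_cast hn
    linarith
  have hterm : ∀ w ∈ Ww n ν, ‖hW a A b B n w z‖ ≤ M ^ (2 * ν) / (|(n : ℝ)| / 2) ^ ν :=
    fun w hw => by
      rw [hW, norm_div, ← hw.1]
      exact div_le_div₀ (by positivity) (norm_numW_le hM ha hA hb hB w) (by positivity)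
        (hw.pow_le_norm_denW hν hn hz)
  have hcard : ((listsOfLength ({2, -2} : Finset ℤ) (2 * ν)).card : ℝ) ≤ 4 ^ ν := by
    have := card_listsOfLength_le ({2, -2} : Finset ℤ) (2 * ν)
    rw [card_pair (by norm_num), pow_mul] at this
    exact_mod_cast this
  calc _ ≤ _ := norm_tsum_subtype_le_of_subset (Ww_subset_listsOfLength n ν) (by positivity) hterm
    _ ≤ 4 ^ ν * (M ^ (2 * ν) / (|(n : ℝ)| / 2) ^ ν) := by gcongr
    _ = (8 * M ^ 2) ^ ν / |(n : ℝ)| ^ ν := by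
      rw [div_pow, pow_mul, mul_div_assoc', div_div_eq_mul_div, ← mul_pow, ← mul_pow]
      ring

lemma summable_and_tsum_le_of_le_pow_add_three {u : ℕ → ℝ} {r : ℝ} (hr0 : 0 ≤ r)
    (hr : r ≤ 1 / 2) (hu0 : ∀ k, 0 ≤ u k) (hu : ∀ k, u k ≤ r ^ (k + 3)) :
    Summable u ∧ ∑' k, u k ≤ 2 * r ^ 3 := by
  have hr1 : r < 1 := by linarith
  have hgeom : HasSum (fun k => r ^ (k + 3)) (r ^ 3 * (1 - r)⁻¹) := by
    simpa [pow_add, mul_comm] using (hasSum_geometric_of_lt_one hr0 hr1).mul_left (r ^ 3)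
  have hsum : Summable u := hgeom.summable.of_nonneg_of_le hu0 hu
  refine ⟨hsum, (hsum.tsum_le_tsum hu hgeom.summable).trans ?_⟩
  rw [hgeom.tsum_eq]
  have : (1 - r)⁻¹ ≤ 2 := by rw [inv_le_comm₀ (by linarith) (by norm_num)]; linarith
  nlinarith [pow_nonneg hr0 3]

theorem stmt6_general (a A b B : ℂ) :
    ∃ C > (0 : ℝ), ∃ N : ℕ,
      (∀ n : ℤ, (N : ℤ) ≤ |n| → ∀ ν : ℕ, 3 ≤ ν → ∀ z : ℂ, ‖z‖ ≤ 1 / 2 →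
        ‖tauW a A b B n ν z‖ ≤ C ^ ν / (|n| : ℝ) ^ ν) ∧
      ∃ C' > (0 : ℝ), ∀ n : ℤ, (N : ℤ) ≤ |n| → ∀ z : ℂ, ‖z‖ ≤ 1 / 2 →
        Summable (fun ν : ℕ => ‖tauW a A b B n (ν + 3) z‖) ∧
        (∑' ν : ℕ, ‖tauW a A b B n (ν + 3) z‖) ≤ C' / (|n| : ℝ) ^ 3 := by
  set M : ℝ := 1 + ‖a‖ + ‖A‖ + ‖b‖ + ‖B‖
  have hnorms : 0 ≤ ‖a‖ ∧ 0 ≤ ‖A‖ ∧ 0 ≤ ‖b‖ ∧ 0 ≤ ‖B‖ :=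
    ⟨norm_nonneg _, norm_nonneg _, norm_nonneg _, norm_nonneg _⟩
  set C : ℝ := 8 * M ^ 2
  have hτ : ∀ {n : ℤ}, 3 ≤ |n| → ∀ {ν : ℕ}, 1 ≤ ν → ∀ {z : ℂ}, ‖z‖ ≤ 1 / 2 →
      ‖tauW a A b B n ν z‖ ≤ C ^ ν / |(n : ℝ)| ^ ν :=
    norm_tauW_le (by linarith) (by linarith) (by linarith) (by linarith) (by linarith)
  have hC : 0 < C := by positivity
  have hN : ∀ n : ℤ, ((max 3 ⌈2 * C⌉₊ : ℕ) : ℤ) ≤ |n| → 3 ≤ |n| ∧ 2 * C ≤ |(n : ℝ)| := by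
    intro n hn
    rw [← Int.natCast_natAbs, Nat.cast_le, max_le_iff, Nat.ceil_le, Nat.cast_natAbs] at hn
    exact ⟨by rw [← Int.natCast_natAbs]; exact_mod_cast hn.1, by exact_mod_cast hn.2⟩
  refine ⟨C, hC, max 3 ⌈2 * C⌉₊, fun n hn ν hν z hz => hτ (hN n hn).1 (by omega) hz,
    2 * C ^ 3, by positivity, fun n hn z hz => ?_⟩
  obtain ⟨hn3, hnC⟩ := hN n hn
  have hR : 0 < |(n : ℝ)| := by linarith
  have hr : C / |(n : ℝ)| ≤ 1 / 2 := by rw [div_le_iff₀ hR]; linarith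
  have := summable_and_tsum_le_of_le_pow_add_three (by positivity) hr (fun _ => norm_nonneg _)
    fun k => (hτ hn3 (by omega) hz).trans_eq (div_pow C _ (k + 3)).symm
  rwa [div_pow, ← mul_div_assoc] at this

/-- There exist `C > 0` (depending only on `a, A, b, B`) and `N` such that for `|n| ≥ N`,
`ν ≥ 3` and `|z| ≤ 1/2` one has `|τ_ν(n, z)| ≤ C^ν/|n|^ν`; consequently
`∑_{ν=3}^∞ |τ_ν(n, z)| = O(1/|n|³)` uniformly for `|z| ≤ 1/2`. -/
theorem stmt6 (a A b B : ℂ) (ha : a ≠ 0) (hA : A ≠ 0) (hb : b ≠ 0) (hB : B ≠ 0) :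
    ∃ C > (0 : ℝ), ∃ N : ℕ,
      (∀ n : ℤ, (N : ℤ) ≤ |n| → ∀ ν : ℕ, 3 ≤ ν → ∀ z : ℂ, ‖z‖ ≤ 1 / 2 →
        ‖tauW a A b B n ν z‖ ≤ C ^ ν / (|n| : ℝ) ^ ν) ∧
      ∃ C' > (0 : ℝ), ∀ n : ℤ, (N : ℤ) ≤ |n| → ∀ z : ℂ, ‖z‖ ≤ 1 / 2 →
        Summable (fun ν : ℕ => ‖tauW a A b B n (ν + 3) z‖) ∧
        (∑' ν : ℕ, ‖tauW a A b B n (ν + 3) z‖) ≤ C' / (|n| : ℝ) ^ 3 :=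
  stmt6_general a A b B
end
end

section
/- For every m ∈ ℕ with m ≥ 1: if n = 2m+1 then X_n(0) is a singleton consisting of the walk ξ with all 2m+1 steps equal to 2, and σ⁺₀(n,0) = h⁺(ξ,0) = A^m B^{m+1} / (4^{2m} (m!)²); if n = -(2m+1) then X_n(0) is a singleton consisting of the walk with all 2m+1 steps equal to -2, and σ⁺₀(n,0) = a^m b^{m+1} / (4^{2m} (m!)²). -/
open Finset

noncomputable section

lemma getD_repl (L t : ℕ) (c : ℤ) (h : t < L) : (List.replicate L c).getD t 0 = c := by
  rw [List.getD_eq_getElem _ _ (by simpa using h)]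
  simp

lemma prodPairHelper {M : Type*} [CommMonoid M] (g : ℕ → M) (m : ℕ) :
    ∏ k ∈ Finset.Icc 1 (2*m), g k = ∏ j ∈ Finset.Icc 1 m, (g (2*j-1) * g (2*j)) := by
  induction m with
  | zero => simp
  | succ m ih =>
    have e2 : 2*(m+1) = (2*m+1)+1 := by ring
    rw [e2, Finset.prod_Icc_succ_top (by omega), Finset.prod_Icc_succ_top (by omega),
        Finset.prod_Icc_succ_top (by omega), ih]
    have e3 : 2*(m+1)-1 = 2*m+1 := by omega
    rw [e3, ← e2, mul_assoc]

lemma prod_refl (m : ℕ) : ∏ j ∈ Finset.Icc 1 m, (m+1-j) = m.factorial := by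
  have h1 : ∏ j ∈ Finset.Icc 1 m, (m+1-j) = ∏ j ∈ Finset.Icc 1 m, j := by
    apply Finset.prod_nbij' (fun j => m+1-j) (fun j => m+1-j) <;>
      (intro x hx; simp [Finset.mem_Icc] at hx ⊢; try omega)
  rw [h1, ← Finset.prod_range_add_one_eq_factorial m]
  apply Finset.prod_nbij' (fun j => j-1) (fun j => j+1) <;>
    (intro x hx; simp [Finset.mem_Icc] at hx ⊢; try omega)

lemma prod_alt {M : Type*} [CommMonoid M] (Q P : M) (m : ℕ) :
    ∏ t ∈ Finset.range (2*m+1), (if t % 2 = 0 then Q else P) = Q^(m+1) * P^m := by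
  induction m with
  | zero => simp
  | succ m ih =>
    have e : 2*(m+1)+1 = ((2*m+1)+1)+1 := by ring
    rw [e, Finset.prod_range_succ, Finset.prod_range_succ, ih]
    have h1 : (2*m+1) % 2 = 1 := by omega
    have h2 : (2*m+1+1) % 2 = 0 := by omega
    rw [h1, h2]
    simp [pow_succ]
    ac_rfl

lemma prod_nat (m : ℕ) : ∏ j ∈ Finset.Icc 1 m, (16 * j * (m+1-j)) = 16^m * m.factorial^2 := by
  rw [Finset.prod_mul_distrib, Finset.prod_mul_distrib, Finset.prod_const, prod_refl,
      Nat.card_Icc]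
  have : ∏ j ∈ Finset.Icc 1 m, j = m.factorial := by
    rw [← Finset.prod_range_add_one_eq_factorial m]
    apply Finset.prod_nbij' (fun j => j-1) (fun j => j+1) <;>
      (intro x hx; simp [Finset.mem_Icc] at hx ⊢; try omega)
  rw [this]
  simp [sq]
  ring

lemma vtx_repl (n c : ℤ) (L k : ℕ) (h : k ≤ L) :
    vtx n (List.replicate L c) k = -n + k * c := by
  rw [vtx, List.take_replicate, List.sum_replicate]
  rw [min_eq_left h, nsmul_eq_mul]

lemma Xw_pos (m : ℕ) : Xw (2*(m:ℤ)+1) 0 = {List.replicate (2*m+1) 2} := by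
  ext x
  simp only [Set.mem_singleton_iff, Xw, Set.mem_setOf_eq]
  constructor
  · rintro ⟨⟨hodd, hsteps, hsum, hvtx⟩, hc, -⟩
    have hc0 : x.count (-2) = 0 := hc (by positivity)
    rw [List.count_eq_zero] at hc0
    have hall : ∀ s ∈ x, s = (2:ℤ) := by
      intro s hs
      rcases hsteps s hs with h | h
      · exact h
      · exact absurd (h ▸ hs) hc0
    have hx : x = List.replicate x.length 2 := List.eq_replicate_iff.mpr ⟨rfl, hall⟩
    have hlen : x.length = 2*m+1 := by
      have h2 := hsum
      rw [hx, List.sum_replicate, nsmul_eq_mul] at h2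
      omega
    rw [hx, hlen]
  · rintro rfl
    refine ⟨⟨⟨m, by rw [List.length_replicate]⟩, ?_, ?_, ?_⟩, ?_, ?_⟩
    · intro s hs; rw [List.eq_of_mem_replicate hs]; left; rfl
    · rw [List.sum_replicate, nsmul_eq_mul]; push_cast; ring
    · intro k hk1 hk2
      rw [List.length_replicate] at hk2
      rw [vtx_repl _ _ _ _ (by omega)]
      constructor
      · intro _; intro h; omega
      · intro _; intro h; omega
    · intro _; simp [List.count_replicate]
    · intro h; exfalso; omega

lemma Xw_neg (m : ℕ) : Xw (-(2*(m:ℤ)+1)) 0 = {List.replicate (2*m+1) (-2)} := by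
  ext x
  simp only [Set.mem_singleton_iff, Xw, Set.mem_setOf_eq]
  constructor
  · rintro ⟨⟨hodd, hsteps, hsum, hvtx⟩, -, hc⟩
    have hc0 : x.count 2 = 0 := hc (by omega)
    rw [List.count_eq_zero] at hc0
    have hall : ∀ s ∈ x, s = (-2:ℤ) := by
      intro s hs
      rcases hsteps s hs with h | h
      · exact absurd (h ▸ hs) hc0
      · exact h
    have hx : x = List.replicate x.length (-2) := List.eq_replicate_iff.mpr ⟨rfl, hall⟩
    have hlen : x.length = 2*m+1 := by
      have h2 := hsum
      rw [hx, List.sum_replicate, nsmul_eq_mul] at h2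
      omega
    rw [hx, hlen]
  · rintro rfl
    refine ⟨⟨⟨m, by rw [List.length_replicate]⟩, ?_, ?_, ?_⟩, ?_, ?_⟩
    · intro s hs; rw [List.eq_of_mem_replicate hs]; right; rfl
    · rw [List.sum_replicate, nsmul_eq_mul]; push_cast; ring
    · intro k hk1 hk2
      rw [List.length_replicate] at hk2
      rw [vtx_repl _ _ _ _ (by omega)]
      constructor
      · intro _; intro h; omega
      · intro _; intro h; omega
    · intro h; exfalso; omega
    · intro _; simp [List.count_replicate]

lemma numX_repl (a A b B : ℂ) (c : ℤ) (m : ℕ) :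
    numX a A b B (List.replicate (2*m+1) c) = (qc b B c)^(m+1) * (pc a A c)^m := by
  rw [numX, List.length_replicate, ← prod_alt]
  refine Finset.prod_congr rfl fun t ht => ?_
  rw [Finset.mem_range] at ht
  rw [getD_repl _ _ _ ht]

lemma denX_pos (m : ℕ) :
    denX (2*(m:ℤ)+1) (List.replicate (2*m+1) 2) 0 = (16:ℂ)^m * (m.factorial:ℂ)^2 := by
  have key : denX (2*(m:ℤ)+1) (List.replicate (2*m+1) 2) 0
      = ∏ j ∈ Finset.Icc 1 m, ((16*j*(m+1-j) : ℕ) : ℂ) := by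
    rw [denX, List.length_replicate]
    have hL : 2*m+1-1 = 2*m := rfl
    rw [hL, prodPairHelper]
    refine Finset.prod_congr rfl fun j hj => ?_
    rw [Finset.mem_Icc] at hj
    rw [vtx_repl _ _ _ _ (by omega : 2*j-1 ≤ 2*m+1), vtx_repl _ _ _ _ (by omega : 2*j ≤ 2*m+1)]
    have hm1 : (2*j-1) % 2 = 1 := by omega
    have hm2 : (2*j) % 2 = 0 := by omega
    rw [hm1, hm2]
    norm_num
    push_cast [Nat.cast_sub (by omega : 1 ≤ 2*j), Nat.cast_sub (by omega : j ≤ m+1)]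
    ring
  rw [key, ← Nat.cast_prod, prod_nat]
  push_cast
  ring

lemma denX_neg (m : ℕ) :
    denX (-(2*(m:ℤ)+1)) (List.replicate (2*m+1) (-2)) 0 = (16:ℂ)^m * (m.factorial:ℂ)^2 := by
  have key : denX (-(2*(m:ℤ)+1)) (List.replicate (2*m+1) (-2)) 0
      = ∏ j ∈ Finset.Icc 1 m, ((16*j*(m+1-j) : ℕ) : ℂ) := by
    rw [denX, List.length_replicate]
    have hL : 2*m+1-1 = 2*m := rfl
    rw [hL, prodPairHelper]
    refine Finset.prod_congr rfl fun j hj => ?_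
    rw [Finset.mem_Icc] at hj
    rw [vtx_repl _ _ _ _ (by omega : 2*j-1 ≤ 2*m+1), vtx_repl _ _ _ _ (by omega : 2*j ≤ 2*m+1)]
    have hm1 : (2*j-1) % 2 = 1 := by omega
    have hm2 : (2*j) % 2 = 0 := by omega
    rw [hm1, hm2]
    norm_num
    push_cast [Nat.cast_sub (by omega : 1 ≤ 2*j), Nat.cast_sub (by omega : j ≤ m+1)]
    ring
  rw [key, ← Nat.cast_prod, prod_nat]
  push_cast
  ring


/-- For `m ≥ 1`: if `n = 2m+1` then `X_n(0)` is a singleton consisting of the walk with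
all `2m+1` steps equal to `2`, and `σ⁺₀(n, 0) = h⁺(ξ, 0) = A^m B^{m+1}/(4^{2m} (m!)²)`;
if `n = -(2m+1)` then `X_n(0)` is the singleton of the walk with all steps `-2` and
`σ⁺₀(n, 0) = a^m b^{m+1}/(4^{2m} (m!)²)`. -/
theorem stmt9 (a A b B : ℂ) (ha : a ≠ 0) (hA : A ≠ 0) (hb : b ≠ 0) (hB : B ≠ 0)
    (m : ℕ) (hm : 1 ≤ m) :
    (Xw (2 * m + 1) 0 = {List.replicate (2 * m + 1) 2} ∧
      sigmaX a A b B (2 * m + 1) 0 0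
        = hX a A b B (2 * m + 1) (List.replicate (2 * m + 1) 2) 0 ∧
      sigmaX a A b B (2 * m + 1) 0 0
        = A ^ m * B ^ (m + 1) / (4 ^ (2 * m) * ((m.factorial : ℂ)) ^ 2)) ∧
    (Xw (-(2 * m + 1)) 0 = {List.replicate (2 * m + 1) (-2)} ∧
      sigmaX a A b B (-(2 * m + 1)) 0 0
        = hX a A b B (-(2 * m + 1)) (List.replicate (2 * m + 1) (-2)) 0 ∧
      sigmaX a A b B (-(2 * m + 1)) 0 0
        = a ^ m * b ^ (m + 1) / (4 ^ (2 * m) * ((m.factorial : ℂ)) ^ 2)) := by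
  
  have hs1 : sigmaX a A b B (2 * m + 1) 0 0
      = hX a A b B (2 * m + 1) (List.replicate (2 * m + 1) 2) 0 := by
    rw [sigmaX, Xw_pos]
    exact tsum_singleton (List.replicate (2*m+1) 2) (fun x => hX a A b B (2*(m:ℤ)+1) x 0)
  have hs2 : sigmaX a A b B (-(2 * m + 1)) 0 0
      = hX a A b B (-(2 * m + 1)) (List.replicate (2 * m + 1) (-2)) 0 := by
    rw [sigmaX, Xw_neg]
    exact tsum_singleton (List.replicate (2*m+1) (-2)) (fun x => hX a A b B (-(2*(m:ℤ)+1)) x 0)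
  have hv1 : hX a A b B (2 * m + 1) (List.replicate (2 * m + 1) 2) 0
      = A ^ m * B ^ (m + 1) / (4 ^ (2 * m) * ((m.factorial : ℂ)) ^ 2) := by
    rw [hX, numX_repl, denX_pos]
    rw [qc, pc]
    norm_num
    rw [pow_mul]
    norm_num
    ring
  have hv2 : hX a A b B (-(2 * m + 1)) (List.replicate (2 * m + 1) (-2)) 0
      = a ^ m * b ^ (m + 1) / (4 ^ (2 * m) * ((m.factorial : ℂ)) ^ 2) := by
    rw [hX, numX_repl, denX_neg]
    rw [qc, pc]
    norm_num
    rw [pow_mul]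
    norm_num
    ring
  exact ⟨⟨Xw_pos m, hs1, hs1.trans hv1⟩, ⟨Xw_neg m, hs2, hs2.trans hv2⟩⟩
end
end

section
/- Let K > 0. Then there exist C > 0 and m₀ ∈ ℕ such that for all m ≥ m₀, n = ±(2m+1), and every z ∈ ℂ with |z| ≤ K/m, the quantity σ⁺₀(n,z) is well defined and |σ⁺₀(n,z)/σ⁺₀(n,0) - 1| ≤ C·(log m)/m. -/
open Finset

noncomputable section

open Filter

/-!
For `n = ±(2m+1)` the only walk in `X_n(0)` is the straight walk `x = (2s, …, 2s)`, `s = sign n`,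
so `σ⁺₀(n,z)/σ⁺₀(n,0) = ∏ₖ cₖ / ∏ₖ (cₖ + z)` with `|cₖ| = 2k` or `2(2m+1-k)`. Writing each factor
as `1 - z/(cₖ + z)`, the product differs from `1` by at most `exp(∑ₖ |z/(cₖ+z)|) - 1`, and the sum
is `O(|z| log m)` because `∑ₖ 1/|cₖ|` is dominated by the harmonic number `H_{2m}`.
-/

lemma vtx_replicate (n : ℤ) {L k : ℕ} (e : ℤ) (hk : k ≤ L) :
    vtx n (List.replicate L e) k = -n + k * e := by
  simp [vtx, List.take_replicate, min_eq_left hk, List.sum_replicate]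

lemma Xw_zero_eq_singleton (m : ℕ) {s : ℤ} (hs : s = 1 ∨ s = -1) :
    Xw ((2 * m + 1) * s) 0 = {List.replicate (2 * m + 1) (2 * s)} := by
  ext x
  simp only [Xw, AdmX, Set.mem_ofPred_eq, Set.mem_singleton_iff]
  constructor
  · rintro ⟨⟨-, hsteps, hsum, -⟩, hpos, hneg⟩
    have hnot : -(2 * s) ∉ x := by
      rcases hs with rfl | rfl
      · exact List.count_eq_zero.mp (hpos (by omega))
      · simpa using List.count_eq_zero.mp (hneg (by omega))
    have hall : ∀ t ∈ x, t = 2 * s := fun t ht => by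
      have := ne_of_mem_of_not_mem ht hnot
      rcases hsteps t ht with h | h <;> rcases hs with rfl | rfl <;> omega
    rw [List.eq_replicate_iff.mpr ⟨rfl, hall⟩] at hsum ⊢
    simp only [List.sum_replicate, nsmul_eq_mul] at hsum
    congr 1
    rcases hs with rfl | rfl <;> simp only [mul_one, mul_neg] at hsum <;> omega
  · rintro rfl
    refine ⟨⟨by simp, fun t ht => ?_, by simp [List.sum_replicate]; ring, fun k hk1 hk2 => ?_⟩,
      fun _ => ?_, fun _ => ?_⟩
    · rw [List.eq_of_mem_replicate ht]; rcases hs with rfl | rfl <;> simp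
    · rw [List.length_replicate] at hk2
      rw [vtx_replicate _ _ hk2.le]
      rcases hs with rfl | rfl <;> exact ⟨fun _ => by omega, fun _ => by omega⟩
    all_goals rcases hs with rfl | rfl <;> first | omega | simp [List.count_replicate]

lemma sigmaX_eq_hX_of_Xw_eq_singleton {a A b B : ℂ} {n : ℤ} {r : ℕ} {x : List ℤ}
    (h : Xw n r = {x}) (z : ℂ) : sigmaX a A b B n r z = hX a A b B n x z := by
  rw [sigmaX, h, tsum_singleton x (fun y => hX a A b B n y z)]

lemma numX_ne_zero {a A b B : ℂ} (ha : a ≠ 0) (hA : A ≠ 0) (hb : b ≠ 0) (hB : B ≠ 0)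
    {x : List ℤ} (hx : ∀ s ∈ x, s = 2 ∨ s = -2) : numX a A b B x ≠ 0 := by
  refine prod_ne_zero_iff.mpr fun t ht => ?_
  rw [mem_range] at ht
  rw [List.getD_eq_getElem _ _ ht]
  rcases hx _ (List.getElem_mem ht) with h | h <;> rw [h] <;> split_ifs <;> simp [pc, qc, *]

def denFactor (n : ℤ) (x : List ℤ) (k : ℕ) : ℤ :=
  if k % 2 = 1 then n - vtx n x k else n + vtx n x k

lemma denX_eq_prod_denFactor_add (n : ℤ) (x : List ℤ) (z : ℂ) :
    denX n x z = ∏ k ∈ Icc 1 (x.length - 1), ((denFactor n x k : ℂ) + z) := by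
  refine prod_congr rfl fun k _ => ?_
  simp only [denFactor]
  split_ifs <;> push_cast <;> rfl

lemma abs_denFactor_replicate (m : ℕ) {s : ℤ} (hs : s = 1 ∨ s = -1) {k : ℕ}
    (hk : k ∈ Icc 1 (2 * m)) :
    |denFactor ((2 * m + 1) * s) (List.replicate (2 * m + 1) (2 * s)) k| = 2 * k ∨
      |denFactor ((2 * m + 1) * s) (List.replicate (2 * m + 1) (2 * s)) k| =
        2 * (2 * m + 1 - k) := by
  rw [mem_Icc] at hk
  rw [denFactor, vtx_replicate _ _ (by omega)]
  rcases hs with rfl | rfl <;> split_ifs <;> simp only [mul_one, mul_neg] <;>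
    first
    | (rw [abs_of_nonneg (by omega)]; omega)
    | (rw [abs_of_nonpos (by omega)]; omega)

lemma sum_inv_le_one_add_log (N : ℕ) (d : ℕ → ℝ)
    (hd : ∀ k ∈ Icc 1 N, d k = 2 * k ∨ d k = 2 * (N + 1 - k)) :
    ∑ k ∈ Icc 1 N, (d k)⁻¹ ≤ 1 + Real.log N := by
  have hreflect :
      ∑ k ∈ Icc 1 N, ((2 : ℝ) * (N + 1 - k))⁻¹ = ∑ k ∈ Icc 1 N, ((2 : ℝ) * k)⁻¹ := by
    refine sum_nbij' (fun k => N + 1 - k) (fun k => N + 1 - k) ?_ ?_ ?_ ?_ ?_ <;>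
      intro k hk <;> simp only [mem_Icc] at hk ⊢
    any_goals omega
    rw [Nat.cast_sub (by omega)]
    push_cast
    ring
  calc ∑ k ∈ Icc 1 N, (d k)⁻¹
      ≤ ∑ k ∈ Icc 1 N, (((2 : ℝ) * k)⁻¹ + ((2 : ℝ) * (N + 1 - k))⁻¹) := by
        refine sum_le_sum fun k hk => ?_
        rw [mem_Icc] at hk
        have hk1 : (1 : ℝ) ≤ k := by exact_mod_cast hk.1
        have hkN : (k : ℝ) ≤ N := by exact_mod_cast hk.2
        have h1 : 0 < ((2 : ℝ) * k)⁻¹ := by positivity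
        have h2 : 0 < ((2 : ℝ) * (N + 1 - k))⁻¹ := inv_pos.mpr (by linarith)
        rcases hd k (mem_Icc.mpr hk) with h | h <;> rw [h] <;> linarith
    _ = ∑ k ∈ Icc 1 N, (k : ℝ)⁻¹ := by
        rw [sum_add_distrib, hreflect, ← sum_add_distrib]
        exact sum_congr rfl fun k _ => by ring
    _ = harmonic N := by simp [harmonic_eq_sum_Icc]
    _ ≤ 1 + Real.log N := harmonic_le_one_add_log N

section NormedField

variable {𝕜 : Type*} [NormedField 𝕜]

lemma half_norm_le_norm_add {c z : 𝕜} (h : 2 * ‖z‖ ≤ ‖c‖) : ‖c‖ / 2 ≤ ‖c + z‖ := by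
  have := norm_sub_norm_le c (-z)
  rw [norm_neg, sub_neg_eq_add] at this
  linarith

lemma norm_prod_div_prod_add_sub_one_le {ι : Type*} (t : Finset ι) (c : ι → 𝕜) (z : 𝕜)
    (hc0 : ∀ i ∈ t, c i ≠ 0) (hc : ∀ i ∈ t, 2 * ‖z‖ ≤ ‖c i‖)
    (hS : 2 * ‖z‖ * ∑ i ∈ t, ‖c i‖⁻¹ ≤ 1) :
    ‖(∏ i ∈ t, c i) / ∏ i ∈ t, (c i + z) - 1‖ ≤ 4 * ‖z‖ * ∑ i ∈ t, ‖c i‖⁻¹ := by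
  have hnorm_add : ∀ i ∈ t, ‖c i‖ / 2 ≤ ‖c i + z‖ := fun i hi => half_norm_le_norm_add (hc i hi)
  have hne : ∀ i ∈ t, c i + z ≠ 0 := fun i hi =>
    norm_pos_iff.mp ((half_pos (norm_pos_iff.mpr (hc0 i hi))).trans_le (hnorm_add i hi))
  set w : ι → 𝕜 := fun i => -z / (c i + z)
  have hprod : (∏ i ∈ t, c i) / ∏ i ∈ t, (c i + z) = ∏ i ∈ t, (1 + w i) := by
    rw [← prod_div_distrib]
    refine prod_congr rfl fun i hi => ?_
    simp only [w]
    field_simp [hne i hi]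
    ring
  have hw : ∑ i ∈ t, ‖w i‖ ≤ 2 * ‖z‖ * ∑ i ∈ t, ‖c i‖⁻¹ := by
    rw [mul_sum]
    refine sum_le_sum fun i hi => ?_
    have hci : 0 < ‖c i‖ := norm_pos_iff.mpr (hc0 i hi)
    calc ‖w i‖ = ‖z‖ / ‖c i + z‖ := by rw [norm_div, norm_neg]
      _ ≤ ‖z‖ / (‖c i‖ / 2) :=
          div_le_div_of_nonneg_left (norm_nonneg z) (half_pos hci) (hnorm_add i hi)
      _ = 2 * ‖z‖ * ‖c i‖⁻¹ := by field_simp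
  have hw0 : 0 ≤ ∑ i ∈ t, ‖w i‖ := sum_nonneg fun i _ => norm_nonneg _
  calc ‖(∏ i ∈ t, c i) / ∏ i ∈ t, (c i + z) - 1‖
      ≤ Real.exp (∑ i ∈ t, ‖w i‖) - 1 := hprod ▸ t.norm_prod_one_add_sub_one_le w
    _ ≤ 2 * ∑ i ∈ t, ‖w i‖ := by
        have := Real.abs_exp_sub_one_le (x := ∑ i ∈ t, ‖w i‖) (by rw [abs_of_nonneg hw0]; linarith)
        rw [abs_of_nonneg hw0] at this
        exact (le_abs_self _).trans this
    _ ≤ 4 * ‖z‖ * ∑ i ∈ t, ‖c i‖⁻¹ := by linarith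

lemma norm_prod_div_prod_add_sub_one_le_log {m : ℕ} {K : ℝ} (hm : 3 ≤ m) (hKm : K ≤ m)
    (hlog : 6 * K * Real.log m ≤ m) (c : ℕ → 𝕜)
    (hc : ∀ k ∈ Icc 1 (2 * m), ‖c k‖ = 2 * k ∨ ‖c k‖ = 2 * (2 * m + 1 - k))
    {z : 𝕜} (hz : ‖z‖ ≤ K / m) :
    (∀ k ∈ Icc 1 (2 * m), c k + z ≠ 0) ∧
      ‖(∏ k ∈ Icc 1 (2 * m), c k) / ∏ k ∈ Icc 1 (2 * m), (c k + z) - 1‖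
        ≤ 12 * K * Real.log m / m := by
  have hm0 : (0 : ℝ) < m := by positivity
  have hK0 : 0 ≤ K := by
    have := (norm_nonneg z).trans hz
    rwa [le_div_iff₀ hm0, zero_mul] at this
  have hz1 : ‖z‖ ≤ 1 := hz.trans ((div_le_one hm0).mpr hKm)
  have hc2 : ∀ k ∈ Icc 1 (2 * m), 2 ≤ ‖c k‖ := fun k hk => by
    have hk' := mem_Icc.mp hk
    have h1 : (1 : ℝ) ≤ k := by exact_mod_cast hk'.1
    have h2 : (k : ℝ) ≤ 2 * m := by exact_mod_cast hk'.2
    rcases hc k hk with h | h <;> rw [h] <;> linarith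
  have hc0 : ∀ k ∈ Icc 1 (2 * m), c k ≠ 0 := fun k hk =>
    norm_pos_iff.mp (by linarith [hc2 k hk])
  have hlog1 : 1 ≤ Real.log m := by
    rw [Real.le_log_iff_exp_le hm0]
    have : (3 : ℝ) ≤ m := by exact_mod_cast hm
    linarith [Real.exp_one_lt_d9]
  have hsum : ∑ k ∈ Icc 1 (2 * m), ‖c k‖⁻¹ ≤ 3 * Real.log m :=
    calc ∑ k ∈ Icc 1 (2 * m), ‖c k‖⁻¹ ≤ 1 + Real.log ((2 * m : ℕ) : ℝ) :=
          sum_inv_le_one_add_log (2 * m) (‖c ·‖) (by push_cast; exact hc)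
      _ ≤ 3 * Real.log m := by
          rw [Nat.cast_mul, Nat.cast_two, Real.log_mul two_ne_zero hm0.ne']
          linarith [Real.log_two_lt_d9]
  have hS : 2 * ‖z‖ * ∑ k ∈ Icc 1 (2 * m), ‖c k‖⁻¹ ≤ 1 :=
    calc 2 * ‖z‖ * ∑ k ∈ Icc 1 (2 * m), ‖c k‖⁻¹ ≤ 2 * (K / m) * (3 * Real.log m) := by
          gcongr
      _ = 6 * K * Real.log m / m := by ring
      _ ≤ 1 := (div_le_one hm0).mpr hlog
  refine ⟨fun k hk => norm_pos_iff.mp ?_, ?_⟩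
  · linarith [hc2 k hk, half_norm_le_norm_add (show 2 * ‖z‖ ≤ ‖c k‖ by linarith [hc2 k hk])]
  calc ‖(∏ k ∈ Icc 1 (2 * m), c k) / ∏ k ∈ Icc 1 (2 * m), (c k + z) - 1‖
      ≤ 4 * ‖z‖ * ∑ k ∈ Icc 1 (2 * m), ‖c k‖⁻¹ :=
        norm_prod_div_prod_add_sub_one_le _ c z hc0 (fun k hk => by linarith [hc2 k hk]) hS
    _ ≤ 4 * (K / m) * (3 * Real.log m) := by gcongr
    _ = 12 * K * Real.log m / m := by ring

end NormedField

lemma eventually_six_mul_log_le {K : ℝ} (hK : 0 < K) :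
    ∀ᶠ m : ℕ in atTop, 3 ≤ m ∧ K ≤ m ∧ 6 * K * Real.log m ≤ m := by
  have hlog := tendsto_natCast_atTop_atTop.eventually
    (Real.isLittleO_log_id_atTop.bound (c := (6 * K)⁻¹) (by positivity))
  filter_upwards [eventually_ge_atTop 3, tendsto_natCast_atTop_atTop.eventually_ge_atTop K, hlog]
    with m h3 hKm hm
  refine ⟨h3, hKm, ?_⟩
  rw [Real.norm_eq_abs, id, Real.norm_natCast] at hm
  calc 6 * K * Real.log m ≤ 6 * K * ((6 * K)⁻¹ * m) := by gcongr; exact (le_abs_self _).trans hm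
    _ = m := by field_simp

/-- For every `K > 0` there are `C > 0` and `m₀` such that for all `m ≥ m₀`,
`n = ±(2m+1)`, and `|z| ≤ K/m`, the quantity `σ⁺₀(n, z)` is well defined (all
denominator factors are nonzero) and `|σ⁺₀(n,z)/σ⁺₀(n,0) - 1| ≤ C (log m)/m`. -/
theorem stmt11 (a A b B : ℂ) (ha : a ≠ 0) (hA : A ≠ 0) (hb : b ≠ 0) (hB : B ≠ 0)
    (K : ℝ) (hK : 0 < K) :
    ∃ C > (0 : ℝ), ∃ m₀ : ℕ, ∀ m : ℕ, m₀ ≤ m → ∀ n : ℤ,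
      (n = 2 * m + 1 ∨ n = -(2 * m + 1)) → ∀ z : ℂ, ‖z‖ ≤ K / (m : ℝ) →
        (∀ x ∈ Xw n 0, denX n x z ≠ 0) ∧
        ‖sigmaX a A b B n 0 z / sigmaX a A b B n 0 0 - 1‖
          ≤ C * Real.log m / (m : ℝ) := by
  obtain ⟨m₀, hm₀⟩ := eventually_atTop.mp (eventually_six_mul_log_le hK)
  refine ⟨12 * K, by positivity, m₀, fun m hm n hn z hz => ?_⟩
  obtain ⟨hm3, hKm, hlog⟩ := hm₀ m hm
  obtain ⟨s, hs, rfl⟩ : ∃ s : ℤ, (s = 1 ∨ s = -1) ∧ n = (2 * m + 1) * s := by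
    rcases hn with rfl | rfl
    exacts [⟨1, .inl rfl, by ring⟩, ⟨-1, .inr rfl, by ring⟩]
  set x := List.replicate (2 * m + 1) (2 * s)
  set c : ℕ → ℂ := fun k => denFactor ((2 * m + 1) * s) x k
  have hXw : Xw ((2 * m + 1) * s) 0 = {x} := Xw_zero_eq_singleton m hs
  have hden : ∀ w, denX ((2 * m + 1) * s) x w = ∏ k ∈ Icc 1 (2 * m), (c k + w) := fun w => by
    rw [denX_eq_prod_denFactor_add, List.length_replicate, Nat.add_sub_cancel]
  have hc : ∀ k ∈ Icc 1 (2 * m), ‖c k‖ = 2 * k ∨ ‖c k‖ = 2 * (2 * m + 1 - k) := fun k hk => by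
    simp only [c, Complex.norm_intCast, ← Int.cast_abs]
    rcases abs_denFactor_replicate m hs hk with h | h <;> rw [h] <;> push_cast <;> simp
  obtain ⟨hne, hbound⟩ := norm_prod_div_prod_add_sub_one_le_log hm3 hKm hlog c hc hz
  have hnum : numX a A b B x ≠ 0 := numX_ne_zero ha hA hb hB fun t ht => by
    rw [List.eq_of_mem_replicate ht]; rcases hs with rfl | rfl <;> simp
  refine ⟨by rw [hXw]; rintro _ rfl; rw [hden]; exact prod_ne_zero_iff.mpr hne, ?_⟩
  rw [sigmaX_eq_hX_of_Xw_eq_singleton hXw, sigmaX_eq_hX_of_Xw_eq_singleton hXw, hX, hX,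
    div_div_div_cancel_left' _ _ hnum, hden, hden]
  simpa using hbound
end
end

section
/- Let a, A, b, B be nonzero complex numbers, let K > 0, and let s ∈ {+1, -1}. Then there exist C > 0 and m₀ ∈ ℕ such that for all m ≥ m₀ and all z ∈ ℂ with |z| ≤ K/m, the quantity Φ_m(z) = ∑_{k=1}^{m} bA / ((4(m+1-k) + sz)(4k + sz)) + ∑_{k=2}^{m} aB / ((4(k-1) + sz)(4(m+1-k) + sz)) satisfies |Φ_m(z) - [(Ab+aB)·log m/(8m) + g·(Ab+aB)/(8m)]| ≤ C·(log m)/m², where g is the Euler–Mascheroni constant. -/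
/-!
Both sums are sums over `p + q = n`, `p, q ≥ 1`, of `1 / ((4p + w)(4q + w))` with `w = s z`,
for `n = m + 1` and `n = m` respectively. Replacing `w` by `0` changes a term by
`O(|w| (p + q) / (p² q²))`, which sums to `O(|w| / n) = O(1 / m²)` because `∑ 1/k²` converges.
At `w = 0` the partial fractions `1/(pq) = (1/n)(1/p + 1/q)` turn the sum into `H_{n-1} / (8n)`,
and `H_m = log m + γ + O(1/m)` gives the main term up to `O(log m / m²)`.
-/

open Finset

noncomputable def pairSum (n : ℕ) (w : ℂ) : ℂ :=
  ∑ k ∈ Ioo 0 n, 1 / ((4 * (k : ℂ) + w) * (4 * ((n : ℂ) - k) + w))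

theorem sum_Ioo_zero_reflect {R M : Type*} [Ring R] [AddCommMonoid M] (n : ℕ) (g : R → M) :
    ∑ k ∈ Ioo 0 n, g ((n : R) - k) = ∑ k ∈ Ioo 0 n, g k := by
  refine sum_nbij' (n - ·) (n - ·) ?_ ?_ ?_ ?_ ?_ <;> intro k hk <;> rw [mem_Ioo] at hk
  · rw [mem_Ioo]; omega
  · rw [mem_Ioo]; omega
  · omega
  · omega
  · rw [Nat.cast_sub hk.2.le]

theorem harmonic_pred_eq_sum_Ioo {K : Type*} [DivisionRing K] [CharZero K] (n : ℕ) :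
    ((harmonic (n - 1) : ℚ) : K) = ∑ k ∈ Ioo 0 n, (k : K)⁻¹ := by
  rw [harmonic_eq_sum_Icc]
  push_cast
  rfl

theorem pairSum_zero (n : ℕ) : pairSum n 0 = harmonic (n - 1) / (8 * n) := by
  have partial_fractions : ∀ k ∈ Ioo 0 n, 1 / ((4 * (k : ℂ) + 0) * (4 * ((n : ℂ) - k) + 0)) =
      1 / (16 * n) * (((n : ℂ) - k)⁻¹ + (k : ℂ)⁻¹) := by
    intro k hk
    rw [mem_Ioo] at hk
    have hk0 : (k : ℂ) ≠ 0 := by exact_mod_cast hk.1.ne'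
    have hnk : (n : ℂ) - k ≠ 0 := by
      rw [← Nat.cast_sub hk.2.le]; exact_mod_cast (Nat.sub_pos_of_lt hk.2).ne'
    have hn : (n : ℂ) ≠ 0 := by exact_mod_cast (hk.1.trans hk.2).ne'
    field_simp
    ring
  rw [pairSum, sum_congr rfl partial_fractions, ← mul_sum, sum_add_distrib,
    sum_Ioo_zero_reflect n (·⁻¹), ← harmonic_pred_eq_sum_Ioo]
  ring

theorem three_mul_le_norm_four_mul_add {p : ℝ} (hp : 1 ≤ p) {w : ℂ} (hw : ‖w‖ ≤ 1) :
    3 * p ≤ ‖4 * (p : ℂ) + w‖ := by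
  have := norm_sub_norm_le (4 * (p : ℂ)) (-w)
  rw [norm_neg, sub_neg_eq_add, norm_mul, Complex.norm_real,
    Real.norm_of_nonneg (by linarith)] at this
  norm_num at this
  linarith

theorem norm_one_div_mul_sub_le {p q : ℝ} (hp : 1 ≤ p) (hq : 1 ≤ q) {w : ℂ} (hw : ‖w‖ ≤ 1) :
    ‖1 / ((4 * (p : ℂ) + w) * (4 * q + w)) - 1 / (4 * p * (4 * q))‖ ≤
      ‖w‖ * (p + q) / (p ^ 2 * q ^ 2) := by
  have hP := three_mul_le_norm_four_mul_add hp hw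
  have hQ := three_mul_le_norm_four_mul_add hq hw
  have hP0 : 4 * (p : ℂ) + w ≠ 0 := norm_pos_iff.1 (by linarith)
  have hQ0 : 4 * (q : ℂ) + w ≠ 0 := norm_pos_iff.1 (by linarith)
  have hp0 : (p : ℂ) ≠ 0 := by exact_mod_cast (by linarith : p ≠ 0)
  have hq0 : (q : ℂ) ≠ 0 := by exact_mod_cast (by linarith : q ≠ 0)
  have key : 1 / ((4 * (p : ℂ) + w) * (4 * q + w)) - 1 / (4 * p * (4 * q)) =
      -((4 * ((p + q : ℝ) : ℂ) + w) * w) /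
        ((4 * (p : ℂ) + w) * (4 * q + w) * (16 * (p * q : ℝ))) := by
    push_cast
    field_simp
    ring
  have hnum : ‖(4 * ((p + q : ℝ) : ℂ) + w) * w‖ ≤ 5 * (p + q) * ‖w‖ := by
    rw [norm_mul]
    gcongr
    refine (norm_add_le _ _).trans ?_
    rw [norm_mul, Complex.norm_real, Real.norm_of_nonneg (by linarith)]
    norm_num
    linarith
  have hden : 144 * (p ^ 2 * q ^ 2) ≤ ‖(4 * (p : ℂ) + w) * (4 * q + w) * (16 * (p * q : ℝ))‖ := by
    rw [norm_mul, norm_mul, norm_mul, Complex.norm_real, Real.norm_of_nonneg (by positivity)]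
    norm_num
    have := mul_le_mul hP hQ (by positivity) (norm_nonneg _)
    nlinarith [mul_pos (by linarith : (0:ℝ) < p) (by linarith : (0:ℝ) < q)]
  rw [key, norm_div, norm_neg]
  calc _ ≤ 5 * (p + q) * ‖w‖ / (144 * (p ^ 2 * q ^ 2)) :=
        div_le_div₀ (by positivity) hnum (by positivity) hden
    _ = 5 / 144 * (‖w‖ * (p + q) / (p ^ 2 * q ^ 2)) := by ring
    _ ≤ ‖w‖ * (p + q) / (p ^ 2 * q ^ 2) := by
        linarith [show 0 ≤ ‖w‖ * (p + q) / (p ^ 2 * q ^ 2) by positivity]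

theorem add_div_sq_mul_sq_le {p q : ℝ} (hp : 0 < p) (hq : 0 < q) :
    (p + q) / (p ^ 2 * q ^ 2) ≤ 2 / (p + q) * ((p ^ 2)⁻¹ + (q ^ 2)⁻¹) := by
  rw [div_le_iff₀ (by positivity)]
  field_simp
  nlinarith [sq_nonneg (p - q), mul_pos hp hq]

theorem norm_pairSum_sub_pairSum_zero_le (n : ℕ) {w : ℂ} (hw : ‖w‖ ≤ 1) :
    ‖pairSum n w - pairSum n 0‖ ≤ 8 * ‖w‖ / n := by
  have termwise : ∀ k ∈ Ioo 0 n,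
      ‖1 / ((4 * (k : ℂ) + w) * (4 * ((n : ℂ) - k) + w)) -
          1 / ((4 * (k : ℂ) + 0) * (4 * ((n : ℂ) - k) + 0))‖ ≤
        ‖w‖ * (2 / n * (((k : ℝ) ^ 2)⁻¹ + (((n : ℝ) - k) ^ 2)⁻¹)) := by
    intro k hk
    rw [mem_Ioo] at hk
    have hk1 : (1 : ℝ) ≤ k := by exact_mod_cast hk.1
    have hnk1 : (1 : ℝ) ≤ (n : ℝ) - k := by
      rw [← Nat.cast_sub hk.2.le]; exact_mod_cast Nat.sub_pos_of_lt hk.2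
    have := norm_one_div_mul_sub_le hk1 hnk1 hw
    push_cast at this
    simp only [add_zero]
    refine this.trans ?_
    rw [mul_div_assoc]
    gcongr
    simpa using add_div_sq_mul_sq_le (by linarith : (0 : ℝ) < k) (by linarith : (0 : ℝ) < n - k)
  calc ‖pairSum n w - pairSum n 0‖
      ≤ ∑ k ∈ Ioo 0 n, ‖w‖ * (2 / n * (((k : ℝ) ^ 2)⁻¹ + (((n : ℝ) - k) ^ 2)⁻¹)) := by
        rw [pairSum, pairSum, ← sum_sub_distrib]
        exact norm_sum_le_of_le _ termwise
    _ = ‖w‖ * (2 / n) * (2 * ∑ k ∈ Ioo 0 n, ((k : ℝ) ^ 2)⁻¹) := by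
        rw [← mul_sum, ← mul_sum, sum_add_distrib, sum_Ioo_zero_reflect n (fun x : ℝ => (x ^ 2)⁻¹)]
        ring
    _ ≤ ‖w‖ * (2 / n) * (2 * 2) := by
        gcongr
        simpa using sum_Ioo_inv_sq_le (α := ℝ) 0 n
    _ = 8 * ‖w‖ / n := by ring

theorem abs_harmonic_sub_log_sub_eulerMascheroniConstant_le {m : ℕ} (hm : m ≠ 0) :
    |(harmonic m : ℝ) - Real.log m - Real.eulerMascheroniConstant| ≤ 1 / m := by
  have lower := Real.eulerMascheroniSeq_lt_eulerMascheroniConstant m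
  have upper := Real.eulerMascheroniConstant_lt_eulerMascheroniSeq' m
  rw [Real.eulerMascheroniSeq] at lower
  rw [Real.eulerMascheroniSeq', if_neg hm] at upper
  have hm0 : (0 : ℝ) < m := by positivity
  have hlog : Real.log (m + 1) - Real.log m ≤ 1 / m := by
    rw [← Real.log_div (by positivity) hm0.ne']
    refine (Real.log_le_sub_one_of_pos (by positivity)).trans_eq ?_
    field_simp
    ring
  rw [abs_le]
  constructor <;> linarith

theorem one_le_log_of_three_le {m : ℕ} (hm : 3 ≤ m) : 1 ≤ Real.log m := by
  rw [Real.le_log_iff_exp_le (by positivity)]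
  have : (3 : ℝ) ≤ m := by exact_mod_cast hm
  linarith [Real.exp_one_lt_d9]

theorem abs_harmonic_pred_sub_log_sub_eulerMascheroniConstant_le {m : ℕ} (hm : m ≠ 0) :
    |(harmonic (m - 1) : ℝ) - Real.log m - Real.eulerMascheroniConstant| ≤ 2 / m := by
  have h := abs_harmonic_sub_log_sub_eulerMascheroniConstant_le hm
  have hsucc : (harmonic m : ℝ) = harmonic (m - 1) + 1 / m := by
    conv_lhs => rw [← Nat.sub_add_cancel (Nat.one_le_iff_ne_zero.2 hm), harmonic_succ]
    push_cast [Nat.sub_add_cancel (Nat.one_le_iff_ne_zero.2 hm)]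
    ring
  rw [hsucc] at h
  have : 2 / (m : ℝ) = 1 / m + 1 / m := by ring
  rw [abs_le] at h ⊢
  constructor <;> linarith [h.1, h.2]

theorem abs_harmonic_div_succ_sub_le {m : ℕ} (hlog : 1 ≤ Real.log m) :
    |(harmonic m : ℝ) / (m + 1) - (Real.log m + Real.eulerMascheroniConstant) / m| ≤
      3 * Real.log m / m ^ 2 := by
  have hm : m ≠ 0 := by rintro rfl; simp at hlog; linarith
  have hm0 : (0 : ℝ) < m := by positivity
  set L := Real.log m + Real.eulerMascheroniConstant
  have hL0 : 0 ≤ L := by linarith [Real.one_half_lt_eulerMascheroniConstant]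
  have hL : 1 + L ≤ 3 * Real.log m := by linarith [Real.eulerMascheroniConstant_lt_two_thirds]
  have hH : |(m : ℝ) * (harmonic m - L)| ≤ 1 := by
    have h := abs_harmonic_sub_log_sub_eulerMascheroniConstant_le hm
    rw [abs_mul, abs_of_pos hm0, sub_sub] at *
    calc _ ≤ (m : ℝ) * (1 / m) := by gcongr
      _ = 1 := by field_simp
  have key : (harmonic m : ℝ) / (m + 1) - L / m = (m * (harmonic m - L) - L) / (m * (m + 1)) := by
    field_simp
    ring
  have hnum : |(m : ℝ) * (harmonic m - L) - L| ≤ 1 + L :=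
    (abs_sub _ _).trans (by rw [abs_of_nonneg hL0]; linarith)
  have hden : (0 : ℝ) < m * (m + 1) := by positivity
  rw [key, abs_div, abs_of_pos hden]
  calc _ ≤ (1 + L) / (m * (m + 1)) := by gcongr
    _ ≤ 3 * Real.log m / m ^ 2 := by
        gcongr
        nlinarith

theorem norm_pairSum_zero_sub_le (α β : ℂ) {m : ℕ} (hlog : 1 ≤ Real.log m) :
    ‖α * pairSum (m + 1) 0 + β * pairSum m 0 -
        ((α + β) * (Real.log m : ℂ) / (8 * m) +
          (Real.eulerMascheroniConstant : ℂ) * (α + β) / (8 * m))‖ ≤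
      (‖α‖ + ‖β‖) * Real.log m / m ^ 2 := by
  have hm : m ≠ 0 := by rintro rfl; simp at hlog; linarith
  have hm0 : (0 : ℝ) < m := by positivity
  set γ := Real.eulerMascheroniConstant
  have hsucc := abs_harmonic_div_succ_sub_le hlog
  have hpred : |((harmonic (m - 1) : ℝ) - (Real.log m + γ)) / m| ≤ 2 / m ^ 2 := by
    rw [abs_div, abs_of_pos hm0, ← sub_sub, div_le_div_iff₀ hm0 (by positivity)]
    nlinarith [abs_harmonic_pred_sub_log_sub_eulerMascheroniConstant_le hm,
      div_mul_cancel₀ (2 : ℝ) hm0.ne']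
  have key : α * pairSum (m + 1) 0 + β * pairSum m 0 -
        ((α + β) * (Real.log m : ℂ) / (8 * m) + (γ : ℂ) * (α + β) / (8 * m)) =
      α / 8 * (((harmonic m : ℝ) / (m + 1) - (Real.log m + γ) / m : ℝ) : ℂ) +
        β / 8 * ((((harmonic (m - 1) : ℝ) - (Real.log m + γ)) / m : ℝ) : ℂ) := by
    have hmC : (m : ℂ) ≠ 0 := by exact_mod_cast hm
    have hm1C : (m : ℂ) + 1 ≠ 0 := by exact_mod_cast m.succ_ne_zero
    rw [pairSum_zero, pairSum_zero, Nat.add_sub_cancel]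
    push_cast
    field_simp
    ring
  rw [key]
  refine (norm_add_le _ _).trans ?_
  rw [norm_mul, norm_mul, Complex.norm_real, Complex.norm_real, norm_div, norm_div,
    Complex.norm_ofNat, Real.norm_eq_abs, Real.norm_eq_abs]
  calc ‖α‖ / 8 * |(harmonic m : ℝ) / (m + 1) - (Real.log m + γ) / m| +
        ‖β‖ / 8 * |((harmonic (m - 1) : ℝ) - (Real.log m + γ)) / m|
      ≤ ‖α‖ / 8 * (3 * Real.log m / m ^ 2) + ‖β‖ / 8 * (2 * Real.log m / m ^ 2) := by
        gcongr
        exact hpred.trans (by gcongr; linarith)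
    _ ≤ (‖α‖ + ‖β‖) * Real.log m / m ^ 2 := by
        have : 0 ≤ Real.log m / m ^ 2 := by positivity
        rw [mul_div_assoc, mul_div_assoc, mul_div_assoc]
        nlinarith [norm_nonneg α, norm_nonneg β]

theorem sum_Icc_one_eq_mul_pairSum_succ (c w : ℂ) (m : ℕ) :
    ∑ k ∈ Icc 1 m, c / ((4 * ((m : ℂ) + 1 - k) + w) * (4 * k + w)) = c * pairSum (m + 1) w := by
  rw [pairSum, mul_sum]
  refine sum_congr (by ext; simp; omega) fun k _ => ?_
  push_cast
  ring

theorem sum_Icc_two_eq_mul_pairSum (c w : ℂ) (m : ℕ) :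
    ∑ k ∈ Icc 2 m, c / ((4 * ((k : ℂ) - 1) + w) * (4 * ((m : ℂ) + 1 - k) + w)) =
      c * pairSum m w := by
  rw [pairSum, mul_sum]
  symm
  refine sum_nbij' (· + 1) (· - 1) ?_ ?_ ?_ ?_ ?_ <;> intro k hk <;>
    simp only [mem_Ioo, mem_Icc] at hk ⊢
  all_goals first | omega | (push_cast; ring)

theorem stmt13_general (a A b B : ℂ)
    (K : ℝ) (hK : 0 < K) (s : ℝ) (hs : s = 1 ∨ s = -1) :
    ∃ C > (0 : ℝ), ∃ m₀ : ℕ, ∀ m : ℕ, m₀ ≤ m → ∀ z : ℂ, ‖z‖ ≤ K / (m : ℝ) →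
      ‖((∑ k ∈ Finset.Icc 1 m, b * A /
            ((4 * ((m : ℂ) + 1 - (k : ℂ)) + (s : ℂ) * z) * (4 * (k : ℂ) + (s : ℂ) * z))) +
          (∑ k ∈ Finset.Icc 2 m, a * B /
            ((4 * ((k : ℂ) - 1) + (s : ℂ) * z) * (4 * ((m : ℂ) + 1 - (k : ℂ)) + (s : ℂ) * z)))) -
          ((A * b + a * B) * (Real.log m : ℂ) / (8 * (m : ℂ))
            + (Real.eulerMascheroniConstant : ℂ) * (A * b + a * B) / (8 * (m : ℂ)))‖
        ≤ C * Real.log m / (m : ℝ) ^ 2 := by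
  refine ⟨(‖b * A‖ + ‖a * B‖) * (8 * K + 1) + 1, by positivity, ⌈K⌉₊ + 3, fun m hm z hz => ?_⟩
  set w := (s : ℂ) * z
  have hm0 : (0 : ℝ) < m := by exact_mod_cast (by omega : 0 < m)
  have hlog : 1 ≤ Real.log m := one_le_log_of_three_le (by omega)
  have hwK : ‖w‖ ≤ K / m := by rcases hs with rfl | rfl <;> simpa [w] using hz
  have hw1 : ‖w‖ ≤ 1 :=
    hwK.trans <| (div_le_one hm0).2 <| (Nat.le_ceil K).trans (by exact_mod_cast (by omega))
  have hpert : 8 * ‖w‖ / m ≤ 8 * K * Real.log m / m ^ 2 := by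
    calc 8 * ‖w‖ / m ≤ 8 * (K / m) / m := by gcongr
      _ = 8 * K * 1 / m ^ 2 := by ring
      _ ≤ 8 * K * Real.log m / m ^ 2 := by gcongr
  have hpert_succ : 8 * ‖w‖ / (m + 1 : ℕ) ≤ 8 * ‖w‖ / m := by gcongr; omega
  rw [sum_Icc_one_eq_mul_pairSum_succ, sum_Icc_two_eq_mul_pairSum, mul_comm A b]
  calc _ = ‖b * A * (pairSum (m + 1) w - pairSum (m + 1) 0) + a * B * (pairSum m w - pairSum m 0) +
          (b * A * pairSum (m + 1) 0 + a * B * pairSum m 0 -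
            ((b * A + a * B) * (Real.log m : ℂ) / (8 * m) +
              (Real.eulerMascheroniConstant : ℂ) * (b * A + a * B) / (8 * m)))‖ := by
        congr 1; ring
    _ ≤ ‖b * A‖ * (8 * ‖w‖ / (m + 1 : ℕ)) + ‖a * B‖ * (8 * ‖w‖ / m) +
          (‖b * A‖ + ‖a * B‖) * Real.log m / m ^ 2 := by
        refine norm_add₃_le.trans (add_le_add_three ?_ ?_ (norm_pairSum_zero_sub_le _ _ hlog))
        · rw [norm_mul]; gcongr; exact norm_pairSum_sub_pairSum_zero_le (m + 1) hw1
        · rw [norm_mul]; gcongr; exact norm_pairSum_sub_pairSum_zero_le m hw1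
    _ ≤ ‖b * A‖ * (8 * K * Real.log m / m ^ 2) + ‖a * B‖ * (8 * K * Real.log m / m ^ 2) +
          (‖b * A‖ + ‖a * B‖) * Real.log m / m ^ 2 := by
        gcongr ‖b * A‖ * ?_ + ‖a * B‖ * ?_ + _
        exact hpert_succ.trans hpert
    _ = (‖b * A‖ + ‖a * B‖) * (8 * K + 1) * (Real.log m / m ^ 2) := by ring
    _ ≤ ((‖b * A‖ + ‖a * B‖) * (8 * K + 1) + 1) * (Real.log m / m ^ 2) := by
        gcongr
        linarith
    _ = _ := by ring

/-- For nonzero `a, A, b, B ∈ ℂ`, `K > 0` and a sign `s ∈ {+1, -1}`, there are `C > 0`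
and `m₀` such that for all `m ≥ m₀` and `|z| ≤ K/m` the quantity
`Φ_m(z) = ∑_{k=1}^m bA/((4(m+1-k)+sz)(4k+sz)) + ∑_{k=2}^m aB/((4(k-1)+sz)(4(m+1-k)+sz))`
satisfies `|Φ_m(z) - [(Ab+aB) log m/(8m) + g (Ab+aB)/(8m)]| ≤ C (log m)/m²`, where `g`
is the Euler–Mascheroni constant. -/
theorem stmt13 (a A b B : ℂ) (ha : a ≠ 0) (hA : A ≠ 0) (hb : b ≠ 0) (hB : B ≠ 0)
    (K : ℝ) (hK : 0 < K) (s : ℝ) (hs : s = 1 ∨ s = -1) :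
    ∃ C > (0 : ℝ), ∃ m₀ : ℕ, ∀ m : ℕ, m₀ ≤ m → ∀ z : ℂ, ‖z‖ ≤ K / (m : ℝ) →
      ‖((∑ k ∈ Finset.Icc 1 m, b * A /
            ((4 * ((m : ℂ) + 1 - (k : ℂ)) + (s : ℂ) * z) * (4 * (k : ℂ) + (s : ℂ) * z))) +
          (∑ k ∈ Finset.Icc 2 m, a * B /
            ((4 * ((k : ℂ) - 1) + (s : ℂ) * z) * (4 * ((m : ℂ) + 1 - (k : ℂ)) + (s : ℂ) * z)))) -
          ((A * b + a * B) * (Real.log m : ℂ) / (8 * (m : ℂ))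
            + (Real.eulerMascheroniConstant : ℂ) * (A * b + a * B) / (8 * (m : ℂ)))‖
        ≤ C * Real.log m / (m : ℝ) ^ 2 :=
  stmt13_general a A b B K hK s hs
end

section
/- Let a, A, b, B be nonzero complex numbers and let s ∈ {+1, -1}. Then there exist C > 0 and m₀ ∈ ℕ such that for all m ≥ m₀ and all z ∈ ℂ with |z| ≤ 1/2, the quantity Φ*_m(z) = ∑_{k=1}^{m} |bA| / (|4(m+1-k) + sz|·|4k + sz|) + ∑_{k=2}^{m} |aB| / (|4(k-1) + sz|·|4(m+1-k) + sz|) satisfies Φ*_m(z) ≤ C·(log m)/m. -/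
open Finset

private lemma den_bd (s : ℝ) (hs : s = 1 ∨ s = -1) (z : ℂ) (hz : ‖z‖ ≤ 1/2) (r : ℝ)
    (hr : 1 ≤ r) : 3 * r ≤ ‖4 * (r : ℂ) + (s:ℂ) * z‖ := by
  have h1 : ‖4*(r:ℂ)‖ - ‖-((s:ℂ)*z)‖ ≤ ‖4 * (r : ℂ) + (s:ℂ) * z‖ := by
    have := norm_sub_norm_le (4*(r:ℂ)) (-((s:ℂ)*z))
    simpa [sub_neg_eq_add] using this
  rw [norm_neg] at h1
  have h2 : ‖4*(r:ℂ)‖ = 4*r := by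
    rw [norm_mul, Complex.norm_real]
    simp [abs_of_nonneg (by linarith : (0:ℝ) ≤ r)]
  have hs1 : ‖(s:ℂ)‖ = 1 := by rcases hs with h|h <;> simp [h]
  have h3 : ‖(s:ℂ)*z‖ ≤ 1/2 := by rw [norm_mul, hs1, one_mul]; exact hz
  linarith

private lemma term_bd (s : ℝ) (hs : s = 1 ∨ s = -1) (z : ℂ) (hz : ‖z‖ ≤ 1/2)
    (c r₁ r₂ : ℝ) (hc : 0 ≤ c) (h1 : 1 ≤ r₁) (h2 : 1 ≤ r₂) :
    c / (‖4 * (r₁ : ℂ) + (s:ℂ) * z‖ * ‖4 * (r₂ : ℂ) + (s:ℂ) * z‖)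
      ≤ (c/9) * (1 / (r₁ * r₂)) := by
  have d1 := den_bd s hs z hz r₁ h1
  have d2 := den_bd s hs z hz r₂ h2
  have hr1 : (0:ℝ) < r₁ := by linarith
  have hr2 : (0:ℝ) < r₂ := by linarith
  calc c / (‖4 * (r₁ : ℂ) + (s:ℂ) * z‖ * ‖4 * (r₂ : ℂ) + (s:ℂ) * z‖)
      ≤ c / ((3*r₁) * (3*r₂)) := by
        exact div_le_div_of_nonneg_left hc (by positivity)
          (mul_le_mul d1 d2 (by positivity) (norm_nonneg _))
    _ = c / (9 * (r₁ * r₂)) := by congr 1; ring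
    _ = (c/9) * (1 / (r₁ * r₂)) := by rw [div_mul_div_comm, mul_one]

private lemma sum_refl' (m : ℕ) (g : ℕ → ℝ) :
    ∑ k ∈ Icc 1 m, g (m+1-k) = ∑ k ∈ Icc 1 m, g k := by
  apply Finset.sum_nbij' (fun k => m+1-k) (fun k => m+1-k)
  all_goals intro k hk
  all_goals simp only [mem_Icc] at *
  all_goals omega

private lemma harm_bd (m : ℕ) : ∑ k ∈ Icc 1 m, ((k:ℝ))⁻¹ ≤ 1 + Real.log m := by
  have h := harmonic_le_one_add_log m
  rw [harmonic_eq_sum_Icc] at h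
  push_cast at h
  exact h

private lemma sum_inv_bd (m : ℕ) (hm : 1 ≤ m) :
    ∑ k ∈ Icc 1 m, 1/(((m:ℝ)+1-k)*k) ≤ 2*(1+Real.log m)/((m:ℝ)+1) := by
  have hm1 : (0:ℝ) < (m:ℝ)+1 := by positivity
  have step : ∀ k ∈ Icc 1 m, 1/(((m:ℝ)+1-k)*k)
      = (1/((m:ℝ)+1)) * (((k:ℝ))⁻¹ + ((m:ℝ)+1-k)⁻¹) := by
    intro k hk
    simp only [mem_Icc] at hk
    have hk1 : (1:ℝ) ≤ (k:ℝ) := by exact_mod_cast hk.1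
    have hkm : (k:ℝ) ≤ (m:ℝ) := by exact_mod_cast hk.2
    have h1 : (k:ℝ) ≠ 0 := by linarith
    have h2 : (m:ℝ)+1-k ≠ 0 := by linarith
    field_simp
    ring
  rw [Finset.sum_congr rfl step, ← Finset.mul_sum, Finset.sum_add_distrib]
  have hrefl : ∑ k ∈ Icc 1 m, ((m:ℝ)+1-k)⁻¹ = ∑ k ∈ Icc 1 m, ((k:ℝ))⁻¹ := by
    rw [← sum_refl' m (fun k => ((k:ℝ))⁻¹)]
    apply Finset.sum_congr rfl
    intro k hk
    simp only [mem_Icc] at hk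
    have : ((m+1-k : ℕ) : ℝ) = (m:ℝ)+1-k := by
      push_cast [Nat.cast_sub (by omega : k ≤ m+1)]; ring
    rw [this]
  rw [hrefl]
  have h := harm_bd m
  calc (1/((m:ℝ)+1)) * (∑ k ∈ Icc 1 m, ((k:ℝ))⁻¹ + ∑ k ∈ Icc 1 m, ((k:ℝ))⁻¹)
      ≤ (1/((m:ℝ)+1)) * (2*(1+Real.log m)) := by
        apply mul_le_mul_of_nonneg_left (by linarith) (by positivity)
    _ = 2*(1+Real.log m)/((m:ℝ)+1) := by ring

/-- For nonzero `a, A, b, B ∈ ℂ` and a sign `s ∈ {+1, -1}`, there are `C > 0` and `m₀`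
such that for all `m ≥ m₀` and `|z| ≤ 1/2` the quantity
`Φ*_m(z) = ∑_{k=1}^m |bA|/(|4(m+1-k)+sz||4k+sz|) + ∑_{k=2}^m |aB|/(|4(k-1)+sz||4(m+1-k)+sz|)`
satisfies `Φ*_m(z) ≤ C (log m)/m`. -/
theorem stmt14 (a A b B : ℂ) (ha : a ≠ 0) (hA : A ≠ 0) (hb : b ≠ 0) (hB : B ≠ 0)
    (s : ℝ) (hs : s = 1 ∨ s = -1) :
    ∃ C > (0 : ℝ), ∃ m₀ : ℕ, ∀ m : ℕ, m₀ ≤ m → ∀ z : ℂ, ‖z‖ ≤ 1 / 2 →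
      ((∑ k ∈ Finset.Icc 1 m, ‖b * A‖ /
            (‖4 * ((m : ℂ) + 1 - (k : ℂ)) + (s : ℂ) * z‖ * ‖4 * (k : ℂ) + (s : ℂ) * z‖)) +
        (∑ k ∈ Finset.Icc 2 m, ‖a * B‖ /
            (‖4 * ((k : ℂ) - 1) + (s : ℂ) * z‖ * ‖4 * ((m : ℂ) + 1 - (k : ℂ)) + (s : ℂ) * z‖)))
        ≤ C * Real.log m / (m : ℝ) := by
  have hbA : (0:ℝ) < ‖b * A‖ := norm_pos_iff.mpr (mul_ne_zero hb hA)
  have haB : (0:ℝ) < ‖a * B‖ := norm_pos_iff.mpr (mul_ne_zero ha hB)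
  refine ⟨4*(‖b*A‖ + ‖a*B‖)/9, by positivity, 3, ?_⟩
  intro m hm z hz
  set n := m - 1 with hn
  have hm1 : 1 ≤ m := by omega
  have hn1 : 1 ≤ n := by omega
  have hnr : (n:ℝ) = (m:ℝ) - 1 := by
    rw [hn]; push_cast [Nat.cast_sub hm1]; ring
  have hM0 : (0:ℝ) < (m:ℝ) := by exact_mod_cast Nat.pos_of_ne_zero (by omega)
  have hM3 : (3:ℝ) ≤ (m:ℝ) := by exact_mod_cast hm
  set L := Real.log m with hL
  have hL1 : 1 ≤ L := by
    rw [hL]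
    calc (1:ℝ) = Real.log (Real.exp 1) := (Real.log_exp 1).symm
      _ ≤ Real.log 3 := by
          apply Real.log_le_log (Real.exp_pos 1)
          have := Real.exp_one_lt_d9
          linarith
      _ ≤ Real.log m := Real.log_le_log (by norm_num) hM3
  -- first sum
  have hS1 : (∑ k ∈ Finset.Icc 1 m, ‖b * A‖ /
        (‖4 * ((m : ℂ) + 1 - (k : ℂ)) + (s : ℂ) * z‖ * ‖4 * (k : ℂ) + (s : ℂ) * z‖))
      ≤ (‖b*A‖/9) * (2*(1+L)/((m:ℝ)+1)) := by
    calc (∑ k ∈ Finset.Icc 1 m, ‖b * A‖ /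
          (‖4 * ((m : ℂ) + 1 - (k : ℂ)) + (s : ℂ) * z‖ * ‖4 * (k : ℂ) + (s : ℂ) * z‖))
        ≤ ∑ k ∈ Finset.Icc 1 m, (‖b*A‖/9) * (1/((((m:ℝ)+1-k))*k)) := by
          apply Finset.sum_le_sum
          intro k hk
          simp only [mem_Icc] at hk
          have hk1 : (1:ℝ) ≤ (k:ℝ) := by exact_mod_cast hk.1
          have hkm : (k:ℝ) ≤ (m:ℝ) := by exact_mod_cast hk.2
          have h := term_bd s hs z hz ‖b*A‖ ((m:ℝ)+1-k) (k:ℝ) (norm_nonneg _)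
            (by linarith) hk1
          have e1 : ((((m:ℝ)+1-(k:ℝ)) : ℝ) : ℂ) = (m:ℂ)+1-(k:ℂ) := by push_cast; ring
          rw [e1] at h
          exact_mod_cast h
      _ = (‖b*A‖/9) * ∑ k ∈ Finset.Icc 1 m, 1/((((m:ℝ)+1-k))*k) := by
          rw [Finset.mul_sum]
      _ ≤ (‖b*A‖/9) * (2*(1+L)/((m:ℝ)+1)) := by
          apply mul_le_mul_of_nonneg_left (sum_inv_bd m hm1) (by positivity)
  -- second sum
  have hS2 : (∑ k ∈ Finset.Icc 2 m, ‖a * B‖ /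
        (‖4 * ((k : ℂ) - 1) + (s : ℂ) * z‖ * ‖4 * ((m : ℂ) + 1 - (k : ℂ)) + (s : ℂ) * z‖))
      ≤ (‖a*B‖/9) * (2*(1+L)/(m:ℝ)) := by
    have hre : (∑ k ∈ Finset.Icc 2 m, ‖a * B‖ /
          (‖4 * ((k : ℂ) - 1) + (s : ℂ) * z‖ * ‖4 * ((m : ℂ) + 1 - (k : ℂ)) + (s : ℂ) * z‖))
        = ∑ j ∈ Finset.Icc 1 n, ‖a * B‖ /
          (‖4 * (((j+1:ℕ) : ℂ) - 1) + (s : ℂ) * z‖ *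
            ‖4 * ((m : ℂ) + 1 - ((j+1:ℕ) : ℂ)) + (s : ℂ) * z‖) := by
      apply Finset.sum_nbij' (fun k => k-1) (fun j => j+1)
      all_goals intro k hk
      all_goals simp only [mem_Icc] at *
      · omega
      · omega
      · omega
      · omega
      · congr 3 <;> · congr 1; push_cast [Nat.cast_sub (by omega : 1 ≤ k)]; ring
    rw [hre]
    calc (∑ j ∈ Finset.Icc 1 n, ‖a * B‖ /
          (‖4 * (((j+1:ℕ) : ℂ) - 1) + (s : ℂ) * z‖ *
            ‖4 * ((m : ℂ) + 1 - ((j+1:ℕ) : ℂ)) + (s : ℂ) * z‖))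
        ≤ ∑ j ∈ Finset.Icc 1 n, (‖a*B‖/9) * (1/((((n:ℝ)+1-j))*j)) := by
          apply Finset.sum_le_sum
          intro j hj
          simp only [mem_Icc] at hj
          have hj1 : (1:ℝ) ≤ (j:ℝ) := by exact_mod_cast hj.1
          have hjn : (j:ℝ) ≤ (n:ℝ) := by exact_mod_cast hj.2
          have h := term_bd s hs z hz ‖a*B‖ ((j:ℝ)) ((n:ℝ)+1-j) (norm_nonneg _)
            hj1 (by linarith)
          have e1 : (((j:ℝ)) : ℂ) = ((j+1:ℕ) : ℂ) - 1 := by push_cast; ring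
          have e2 : ((((n:ℝ)+1-(j:ℝ)) : ℝ) : ℂ) = (m:ℂ)+1-((j+1:ℕ):ℂ) := by
            push_cast [hnr]; ring
          rw [e1, e2] at h
          calc ‖a * B‖ /
              (‖4 * (((j+1:ℕ) : ℂ) - 1) + (s : ℂ) * z‖ *
                ‖4 * ((m : ℂ) + 1 - ((j+1:ℕ) : ℂ)) + (s : ℂ) * z‖)
              ≤ (‖a*B‖/9) * (1/((j:ℝ)*((n:ℝ)+1-j))) := h
            _ = (‖a*B‖/9) * (1/((((n:ℝ)+1-j))*j)) := by rw [mul_comm ((j:ℝ)) _]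
      _ = (‖a*B‖/9) * ∑ j ∈ Finset.Icc 1 n, 1/((((n:ℝ)+1-j))*j) := by
          rw [Finset.mul_sum]
      _ ≤ (‖a*B‖/9) * (2*(1+Real.log n)/((n:ℝ)+1)) := by
          apply mul_le_mul_of_nonneg_left (sum_inv_bd n hn1) (by positivity)
      _ ≤ (‖a*B‖/9) * (2*(1+L)/(m:ℝ)) := by
          apply mul_le_mul_of_nonneg_left _ (by positivity)
          have hlogn : Real.log n ≤ L := by
            rw [hL]
            apply Real.log_le_log (by exact_mod_cast Nat.pos_of_ne_zero (by omega))
            exact_mod_cast Nat.sub_le m 1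
          have hnm : (n:ℝ)+1 = (m:ℝ) := by rw [hnr]; ring
          rw [hnm]
          apply div_le_div_of_nonneg_right ?_ hM0.le
          linarith
  -- combine
  have key1 : (‖b*A‖/9) * (2*(1+L)/((m:ℝ)+1)) ≤ (‖b*A‖/9) * (4*L/(m:ℝ)) := by
    apply mul_le_mul_of_nonneg_left _ (by positivity)
    rw [div_le_div_iff₀ (by linarith) hM0]
    nlinarith [mul_nonneg (by linarith : (0:ℝ) ≤ L - 1) (by linarith : (0:ℝ) ≤ (m:ℝ))]
  have key2 : (‖a*B‖/9) * (2*(1+L)/(m:ℝ)) ≤ (‖a*B‖/9) * (4*L/(m:ℝ)) := by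
    apply mul_le_mul_of_nonneg_left _ (by positivity)
    apply div_le_div_of_nonneg_right ?_ hM0.le
    linarith
  have final : (‖b*A‖/9) * (4*L/(m:ℝ)) + (‖a*B‖/9) * (4*L/(m:ℝ))
      = 4*(‖b*A‖ + ‖a*B‖)/9 * L / (m:ℝ) := by ring
  calc _ ≤ (‖b*A‖/9) * (2*(1+L)/((m:ℝ)+1)) + (‖a*B‖/9) * (2*(1+L)/(m:ℝ)) :=
        add_le_add hS1 hS2
    _ ≤ (‖b*A‖/9) * (4*L/(m:ℝ)) + (‖a*B‖/9) * (4*L/(m:ℝ)) := add_le_add key1 key2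
    _ = 4*(‖b*A‖ + ‖a*B‖)/9 * L / (m:ℝ) := final
end

section
/- Let c ∈ ℂ and K > 0, and let (u_m)_{m≥1} be a sequence of complex numbers with |u_m - c/(4m)| ≤ K/m² for all m ≥ 1. Then there exist C > 0 and m₀ ∈ ℕ such that for all m ≥ m₀: every factor 1 + u_m/(4k) (1 ≤ k ≤ m) is nonzero and |∏_{k=1}^{m} (1 + u_m/(4k))^{-2} - [1 - c·log m/(8m) - g·c/(8m)]| ≤ C·(log m)²/m², where g is the Euler–Mascheroni constant. -/
/-! The product is `exp z` with `z = -2 ∑ log (1 + u_m / 4k)`. Since `log (1 + w) = w + O(|w|²)`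
and `∑ 1/k²` converges, `z = -u_m H_m / 2 + O(1/m²)` with `H_m` the harmonic number.
Inserting `u_m = c/4m + O(1/m²)` and `H_m = log m + γ + O(1/m)` gives
`z = -c (log m + γ)/8m + O(log m/m²)`, and `exp z = 1 + z + O(|z|²)` with `|z| = O(log m/m)`. -/

open Finset Filter Asymptotics Topology

lemma abs_harmonic_sub_log_sub_eulerMascheroniConstant_le_s19 {n : ℕ} (hn : n ≠ 0) :
    |(harmonic n : ℝ) - Real.log n - Real.eulerMascheroniConstant| ≤ (n : ℝ)⁻¹ := by
  have hlower := Real.eulerMascheroniConstant_lt_eulerMascheroniSeq' n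
  rw [Real.eulerMascheroniSeq', if_neg hn] at hlower
  have hupper : (harmonic n : ℝ) - Real.log (n + 1) < Real.eulerMascheroniConstant := by
    simpa [Real.eulerMascheroniSeq] using Real.eulerMascheroniSeq_lt_eulerMascheroniConstant n
  have hn0 : (0 : ℝ) < n := by positivity
  have hlog_succ : Real.log (n + 1) - Real.log n ≤ (n : ℝ)⁻¹ := by
    rw [← Real.log_div (by positivity) hn0.ne']
    calc Real.log ((n + 1) / n) ≤ (n + 1) / n - 1 := Real.log_le_sub_one_of_pos (by positivity)
      _ = (n : ℝ)⁻¹ := by field_simp; ring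
  rw [abs_le]
  constructor <;> linarith

lemma isBigO_harmonic_sub_log_sub_eulerMascheroniConstant :
    (fun n : ℕ => (harmonic n : ℝ) - Real.log n - Real.eulerMascheroniConstant)
      =O[atTop] fun n => (n : ℝ)⁻¹ := by
  refine IsBigO.of_bound' ?_
  filter_upwards [eventually_ne_atTop 0] with n hn
  rw [Real.norm_eq_abs, Real.norm_of_nonneg (by positivity)]
  exact abs_harmonic_sub_log_sub_eulerMascheroniConstant_le_s19 hn

lemma one_isBigO_log_natCast : (fun _ : ℕ => (1 : ℝ)) =O[atTop] fun n => Real.log n :=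
  Real.isLittleO_const_log_atTop.natCast_atTop.isBigO

lemma harmonic_isBigO_log : (fun n : ℕ => (harmonic n : ℝ)) =O[atTop] fun n => Real.log n := by
  refine (isBigO_of_le _ fun n => ?_).trans (one_isBigO_log_natCast.add (isBigO_refl _ _))
  have hlog : 0 ≤ Real.log n := Real.log_natCast_nonneg n
  rw [Real.norm_of_nonneg ((Real.log_natCast_nonneg _).trans (log_add_one_le_harmonic n)),
    Real.norm_of_nonneg (by linarith)]
  exact harmonic_le_one_add_log n

lemma inv_natCast_isBigO_log_div :
    (fun n : ℕ => (n : ℝ)⁻¹) =O[atTop] fun n => Real.log n / n := by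
  simpa [div_eq_mul_inv] using
    one_isBigO_log_natCast.mul (isBigO_refl (fun n : ℕ => (n : ℝ)⁻¹) atTop)

lemma norm_log_one_add_sub_self_le_sq {z : ℂ} (hz : ‖z‖ ≤ 1 / 2) :
    ‖Complex.log (1 + z) - z‖ ≤ ‖z‖ ^ 2 := by
  have hinv : (1 - ‖z‖)⁻¹ ≤ 2 := by
    rw [inv_le_comm₀ (by linarith) (by norm_num)]; linarith
  calc ‖Complex.log (1 + z) - z‖ ≤ ‖z‖ ^ 2 * (1 - ‖z‖)⁻¹ / 2 :=
        Complex.norm_log_one_add_sub_self_le (by linarith)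
    _ ≤ ‖z‖ ^ 2 * 2 / 2 := by gcongr
    _ = ‖z‖ ^ 2 := by ring

lemma sum_Icc_inv_sq_le_two (n : ℕ) : ∑ k ∈ Icc 1 n, ((k : ℝ) ^ 2)⁻¹ ≤ 2 := by
  rcases Nat.eq_zero_or_pos n with rfl | hn
  · simp
  rw [Icc_eq_cons_Ioc hn, sum_cons]
  have htail := sum_Ioc_inv_sq_le_sub (α := ℝ) one_ne_zero hn
  have hinv : (0 : ℝ) ≤ (n : ℝ)⁻¹ := by positivity
  norm_num at htail ⊢
  linarith

lemma norm_sum_log_one_add_div_sub_mul_harmonic_le {a : ℂ} (ha : ‖a‖ ≤ 1 / 2) (n : ℕ) :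
    ‖∑ k ∈ Icc 1 n, Complex.log (1 + a / k) - a * (harmonic n : ℝ)‖
      ≤ 2 * ‖a‖ ^ 2 := by
  have hterm : ∀ k ∈ Icc 1 n,
      ‖Complex.log (1 + a / k) - a / k‖ ≤ ‖a‖ ^ 2 * ((k : ℝ) ^ 2)⁻¹ := by
    intro k hk
    have hk : (1 : ℝ) ≤ k := by exact_mod_cast (mem_Icc.mp hk).1
    have hnorm : ‖a / k‖ = ‖a‖ / k := by rw [norm_div, Complex.norm_natCast]
    calc ‖Complex.log (1 + a / k) - a / k‖ ≤ ‖a / k‖ ^ 2 :=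
          norm_log_one_add_sub_self_le_sq (by
            rw [hnorm]; exact (div_le_self (norm_nonneg a) hk).trans ha)
      _ = ‖a‖ ^ 2 * ((k : ℝ) ^ 2)⁻¹ := by rw [hnorm, div_pow, div_eq_mul_inv]
  have hharm : a * (harmonic n : ℝ) = ∑ k ∈ Icc 1 n, a / k := by
    simp [harmonic_eq_sum_Icc, mul_sum, div_eq_mul_inv]
  calc ‖∑ k ∈ Icc 1 n, Complex.log (1 + a / k) - a * (harmonic n : ℝ)‖
      = ‖∑ k ∈ Icc 1 n, (Complex.log (1 + a / k) - a / k)‖ := by rw [hharm, sum_sub_distrib]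
    _ ≤ ∑ k ∈ Icc 1 n, ‖a‖ ^ 2 * ((k : ℝ) ^ 2)⁻¹ := norm_sum_le_of_le _ hterm
    _ = ‖a‖ ^ 2 * ∑ k ∈ Icc 1 n, ((k : ℝ) ^ 2)⁻¹ := (mul_sum _ _ _).symm
    _ ≤ ‖a‖ ^ 2 * 2 := by gcongr; exact sum_Icc_inv_sq_le_two n
    _ = 2 * ‖a‖ ^ 2 := mul_comm _ _

lemma prod_inv_sq_eq_exp_neg_two_mul_sum_log {ι : Type*} {s : Finset ι} {f : ι → ℂ}
    (hf : ∀ i ∈ s, f i ≠ 0) :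
    ∏ i ∈ s, (f i)⁻¹ ^ 2 = Complex.exp (-2 * ∑ i ∈ s, Complex.log (f i)) := by
  rw [mul_sum, Complex.exp_sum]
  refine prod_congr rfl fun i hi => ?_
  rw [inv_pow, neg_mul, Complex.exp_neg, ← Nat.cast_two (R := ℂ), Complex.exp_nat_mul,
    Complex.exp_log (hf i hi)]

lemma tendsto_inv_natCast_atTop_zero : Tendsto (fun n : ℕ => (n : ℝ)⁻¹) atTop (𝓝 0) :=
  tendsto_inv_atTop_zero.comp tendsto_natCast_atTop_atTop

lemma tendsto_log_div_natCast_atTop_zero :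
    Tendsto (fun n : ℕ => Real.log n / n) atTop (𝓝 0) :=
  Real.isLittleO_log_id_atTop.tendsto_div_nhds_zero.comp tendsto_natCast_atTop_atTop

lemma isBigO_inv_natCast_of_isBigO_sub {c : ℂ} {u : ℕ → ℂ}
    (hu : (fun m : ℕ => u m - c / (4 * m)) =O[atTop] fun m => ((m : ℝ) ^ 2)⁻¹) :
    u =O[atTop] fun m => (m : ℝ)⁻¹ := by
  have hsq : (fun m : ℕ => ((m : ℝ) ^ 2)⁻¹) =O[atTop] fun m => (m : ℝ)⁻¹ := by
    simpa [sq, mul_inv] using (isBigO_refl (fun m : ℕ => (m : ℝ)⁻¹) atTop).mul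
      (tendsto_inv_natCast_atTop_zero.isBigO_one ℝ)
  have hmain : (fun m : ℕ => c / (4 * m)) =O[atTop] fun m => (m : ℝ)⁻¹ := by
    refine isBigO_of_le' (c := ‖c‖ / 4) atTop fun m => ?_
    simp [div_eq_mul_inv, mul_comm, mul_left_comm]
  simpa using (hu.trans hsq).add hmain

lemma eventually_norm_div_four_le {u : ℕ → ℂ} (hu : Tendsto u atTop (𝓝 0)) :
    ∀ᶠ m in atTop, ‖u m / 4‖ ≤ 1 / 2 := by
  have : Tendsto (fun m => u m / 4) atTop (𝓝 0) := by simpa using hu.div_const 4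
  simpa using this.eventually (Metric.closedBall_mem_nhds 0 (by norm_num : (0 : ℝ) < 1 / 2))

lemma eventually_one_add_div_ne_zero {u : ℕ → ℂ} (hu : Tendsto u atTop (𝓝 0)) :
    ∀ᶠ m in atTop, ∀ k ∈ Icc 1 m, (1 : ℂ) + u m / (4 * k) ≠ 0 := by
  filter_upwards [eventually_norm_div_four_le hu] with m hm k hk hzero
  have hk : (1 : ℝ) ≤ k := by exact_mod_cast (mem_Icc.mp hk).1
  have hone : ‖u m / 4 / k‖ = 1 := by
    rw [div_div, eq_neg_of_add_eq_zero_right hzero, norm_neg, norm_one]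
  rw [norm_div, Complex.norm_natCast] at hone
  linarith [div_le_self (norm_nonneg (u m / 4)) hk]

lemma isBigO_sum_log_one_add_sub_mul_harmonic {u : ℕ → ℂ} (hu : Tendsto u atTop (𝓝 0)) :
    (fun m : ℕ => ∑ k ∈ Icc 1 m, Complex.log (1 + u m / (4 * k))
        - u m / 4 * (harmonic m : ℝ)) =O[atTop] fun m => u m ^ 2 := by
  refine IsBigO.of_bound (1 / 8) ?_
  filter_upwards [eventually_norm_div_four_le hu] with m hm
  simp_rw [← div_div]
  calc _ ≤ 2 * ‖u m / 4‖ ^ 2 := norm_sum_log_one_add_div_sub_mul_harmonic_le hm m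
    _ = 1 / 8 * ‖u m ^ 2‖ := by rw [norm_div, norm_pow]; norm_num; ring

theorem Asymptotics.IsBigO.cexp_sub_one_sub_self {α : Type*} {l : Filter α} {z : α → ℂ}
    {g : α → ℝ} (hz : z =O[l] g) (hg : Tendsto g l (𝓝 0)) :
    (fun x => Complex.exp (z x) - 1 - z x) =O[l] fun x => g x * g x := by
  refine (IsBigO.of_bound 1 ?_).trans (hz.mul hz)
  filter_upwards [(hz.trans_tendsto hg).eventually (Metric.closedBall_mem_nhds 0 one_pos)]
    with x hx
  rw [one_mul, norm_mul, ← sq]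
  exact Complex.norm_exp_sub_one_sub_id_le (by simpa using hx)

lemma isBigO_div_mul_harmonic_sub_log_sub_eulerMascheroniConstant (c : ℂ) :
    (fun m : ℕ => c / m * ((harmonic m - Real.log m - Real.eulerMascheroniConstant : ℝ) : ℂ))
      =O[atTop] fun m => (m : ℝ)⁻¹ * (m : ℝ)⁻¹ := by
  have hinv : (fun m : ℕ => (((m : ℝ)⁻¹ : ℝ) : ℂ)) =O[atTop] fun m => (m : ℝ)⁻¹ :=
    Complex.isBigO_ofReal_left.mpr (isBigO_refl _ _)
  have hE := Complex.isBigO_ofReal_left.mpr isBigO_harmonic_sub_log_sub_eulerMascheroniConstant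
  refine (hinv.mul hE).const_mul_left c |>.congr_left fun m => ?_
  push_cast
  ring

theorem isBigO_prod_inv_sq_one_add_sub_expansion {c : ℂ} {u : ℕ → ℂ}
    (hu : (fun m : ℕ => u m - c / (4 * m)) =O[atTop] fun m => ((m : ℝ) ^ 2)⁻¹) :
    (fun m : ℕ => ∏ k ∈ Icc 1 m, ((1 : ℂ) + u m / (4 * k))⁻¹ ^ 2
        - (1 - c * (Real.log m : ℂ) / (8 * m)
            - (Real.eulerMascheroniConstant : ℂ) * c / (8 * m)))
      =O[atTop] fun m => Real.log m / m * (Real.log m / m) := by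
  set r : ℕ → ℝ := fun m => (m : ℝ)⁻¹ with hr
  set ℓ : ℕ → ℝ := fun m => Real.log m / m with hℓ
  set S : ℕ → ℂ := fun m => ∑ k ∈ Icc 1 m, Complex.log (1 + u m / (4 * k)) with hSdef
  have hrℓ : r =O[atTop] ℓ := inv_natCast_isBigO_log_div
  have hrr : (fun m => r m * r m) =O[atTop] fun m => ℓ m * ℓ m := hrℓ.mul hrℓ
  have hrL : (fun m => r m * Real.log m) = ℓ := by ext m; simp [hr, hℓ, div_eq_inv_mul]
  have hu1 : u =O[atTop] r := isBigO_inv_natCast_of_isBigO_sub hu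
  have hu0 : Tendsto u atTop (𝓝 0) := hu1.trans_tendsto tendsto_inv_natCast_atTop_zero
  have hH : (fun m : ℕ => ((harmonic m : ℝ) : ℂ)) =O[atTop] fun m => Real.log m :=
    Complex.isBigO_ofReal_left.mpr harmonic_isBigO_log
  have hS : (fun m => S m - u m / 4 * (harmonic m : ℝ)) =O[atTop] fun m => r m * r m :=
    (isBigO_sum_log_one_add_sub_mul_harmonic hu0).trans (by simpa [sq] using hu1.mul hu1)
  have hz : (fun m => -2 * S m) =O[atTop] ℓ := by
    have hrrℓ : (fun m => r m * r m) =O[atTop] ℓ := by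
      simpa using hrℓ.mul (tendsto_inv_natCast_atTop_zero.isBigO_one ℝ)
    have hSℓ : (fun m => -2 * (S m - u m / 4 * (harmonic m : ℝ))) =O[atTop] ℓ :=
      (hS.trans hrrℓ).const_mul_left _
    have huH : (fun m => u m / 2 * (harmonic m : ℝ)) =O[atTop] ℓ := by
      rw [← hrL]; exact (hu1.mul hH).const_mul_left (1 / 2) |>.congr_left fun m => by ring
    exact (hSℓ.sub huH).congr_left fun m => by ring
  have hexp := hz.cexp_sub_one_sub_self tendsto_log_div_natCast_atTop_zero
  have hcorr : (fun m => (u m - c / (4 * m)) / 2 * (harmonic m : ℝ))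
      =O[atTop] fun m => ℓ m * ℓ m := by
    have h : (fun m : ℕ => ((m : ℝ) ^ 2)⁻¹ * Real.log m) =O[atTop] fun m => ℓ m * ℓ m :=
      (hrℓ.mul (isBigO_refl ℓ _)).congr_left fun m => by simp only [hr, hℓ]; ring
    exact ((hu.mul hH).const_mul_left (1 / 2)).trans h |>.congr_left fun m => by ring
  have hγ := (isBigO_div_mul_harmonic_sub_log_sub_eulerMascheroniConstant (c / 8)).trans hrr
  -- With `z = -2 S` the error is, once the factors are nonzero,
  -- `(e^z - 1 - z) - 2 (S - u H / 4) - (u - c / 4m) H / 2 - c / 8m * (H - log m - γ)`.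
  refine (((hexp.add ((hS.trans hrr).const_mul_left (-2))).sub hcorr).sub hγ).congr' ?_
    EventuallyEq.rfl
  filter_upwards [eventually_one_add_div_ne_zero hu0, eventually_ne_atTop 0] with m hne hm
  rw [prod_inv_sq_eq_exp_neg_two_mul_sum_log hne]
  have hm' : (m : ℂ) ≠ 0 := Nat.cast_ne_zero.mpr hm
  simp only [hSdef]
  push_cast
  field_simp
  ring

theorem stmt19_general (c : ℂ) (K : ℝ) (u : ℕ → ℂ)
    (hu : ∀ m : ℕ, 1 ≤ m → ‖u m - c / (4 * (m : ℂ))‖ ≤ K / (m : ℝ) ^ 2) :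
    ∃ C > (0 : ℝ), ∃ m₀ : ℕ, ∀ m : ℕ, m₀ ≤ m →
      (∀ k ∈ Finset.Icc 1 m, (1 : ℂ) + u m / (4 * (k : ℂ)) ≠ 0) ∧
      ‖(∏ k ∈ Finset.Icc 1 m, ((1 : ℂ) + u m / (4 * (k : ℂ)))⁻¹ ^ 2) -
          (1 - c * (Real.log m : ℂ) / (8 * (m : ℂ))
             - (Real.eulerMascheroniConstant : ℂ) * c / (8 * (m : ℂ)))‖
        ≤ C * (Real.log m) ^ 2 / (m : ℝ) ^ 2 := by
  have hu' : (fun m : ℕ => u m - c / (4 * m)) =O[atTop] fun m => ((m : ℝ) ^ 2)⁻¹ :=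
    IsBigO.of_bound K <| (eventually_ge_atTop 1).mono fun m hm => by
      simpa [div_eq_mul_inv] using hu m hm
  have hu0 : Tendsto u atTop (𝓝 0) :=
    (isBigO_inv_natCast_of_isBigO_sub hu').trans_tendsto tendsto_inv_natCast_atTop_zero
  obtain ⟨C, hC, hbound⟩ := (isBigO_prod_inv_sq_one_add_sub_expansion hu').exists_pos
  obtain ⟨m₀, hm₀⟩ :=
    eventually_atTop.mp ((eventually_one_add_div_ne_zero hu0).and hbound.bound)
  refine ⟨C, hC, m₀, fun m hm => ⟨(hm₀ m hm).1, ?_⟩⟩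
  calc _ ≤ C * ‖Real.log m / m * (Real.log m / m)‖ := (hm₀ m hm).2
    _ = C * Real.log m ^ 2 / m ^ 2 := by
      rw [← sq, norm_pow, Real.norm_eq_abs, sq_abs, div_pow, mul_div_assoc]

/-- Let `c ∈ ℂ`, `K > 0`, and let `(u_m)_{m ≥ 1}` satisfy `|u_m - c/(4m)| ≤ K/m²` for all
`m ≥ 1`. Then there are `C > 0` and `m₀` such that for all `m ≥ m₀` every factor
`1 + u_m/(4k)` (`1 ≤ k ≤ m`) is nonzero and
`|∏_{k=1}^m (1 + u_m/(4k))^{-2} - [1 - c log m/(8m) - g c/(8m)]| ≤ C (log m)²/m²`,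
where `g` is the Euler–Mascheroni constant. -/
theorem stmt19 (c : ℂ) (K : ℝ) (hK : 0 < K) (u : ℕ → ℂ)
    (hu : ∀ m : ℕ, 1 ≤ m → ‖u m - c / (4 * (m : ℂ))‖ ≤ K / (m : ℝ) ^ 2) :
    ∃ C > (0 : ℝ), ∃ m₀ : ℕ, ∀ m : ℕ, m₀ ≤ m →
      (∀ k ∈ Finset.Icc 1 m, (1 : ℂ) + u m / (4 * (k : ℂ)) ≠ 0) ∧
      ‖(∏ k ∈ Finset.Icc 1 m, ((1 : ℂ) + u m / (4 * (k : ℂ)))⁻¹ ^ 2) -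
          (1 - c * (Real.log m : ℂ) / (8 * (m : ℂ))
             - (Real.eulerMascheroniConstant : ℂ) * c / (8 * (m : ℂ)))‖
        ≤ C * (Real.log m) ^ 2 / (m : ℝ) ^ 2 :=
  stmt19_general c K u hu
end
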